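/- arXiv:2410.08813 — 13 statements merged into one kernel-verified Lean document; each statement's English description precedes it below -/
import Mathlib

section
/- Mutation of 2-colored exchange matrices is an involution: if C is a skew-symmetric n×n matrix over the split-complex integers 𝕐 and k is any index, then μ_k(μ_k(C)) = C. -/
/-- Positive part of a split-complex integer `z = a + bε`:
`z⁺ = max(a,0) + max(b,0)·ε`. -/
def Zsqrtd.posPart (z : Zsqrtd 1) : Zsqrtd 1 := ⟨max z.re 0, max z.im 0⟩

/-- Negative part of a split-complex integer `z = a + bε`:
`z⁻ = min(a,0) + min(b,0)·ε`. -/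
def Zsqrtd.negPart (z : Zsqrtd 1) : Zsqrtd 1 := ⟨min z.re 0, min z.im 0⟩

/-- Mutation at index `k` of a matrix over the split-complex integers `𝕐 = ℤ[ε]/(ε²−1)`:
`μ_k(C)_{ij} = −C_{ij}` if `i = k` or `j = k`, and
`μ_k(C)_{ij} = C_{ij} + C_{ik}⁺·C_{kj}⁺ − C_{ik}⁻·C_{kj}⁻` otherwise. -/
def twoColoredMutation {n : ℕ} (C : Matrix (Fin n) (Fin n) (Zsqrtd 1)) (k : Fin n) :
    Matrix (Fin n) (Fin n) (Zsqrtd 1) :=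
  fun i j =>
    if i = k ∨ j = k then -C i j
    else C i j + (C i k).posPart * (C k j).posPart - (C i k).negPart * (C k j).negPart

/-! Mutation at `k` negates row and column `k`, and negation swaps positive and negative
parts, so the second mutation subtracts exactly the correction term the first one added. -/

lemma Zsqrtd.posPart_neg (z : Zsqrtd 1) : (-z).posPart = -z.negPart := by
  simp only [Zsqrtd.posPart, Zsqrtd.negPart, Zsqrtd.ext_iff, Zsqrtd.re_neg, Zsqrtd.im_neg]
  constructor <;> omega

lemma Zsqrtd.negPart_neg (z : Zsqrtd 1) : (-z).negPart = -z.posPart := by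
  simp only [Zsqrtd.posPart, Zsqrtd.negPart, Zsqrtd.ext_iff, Zsqrtd.re_neg, Zsqrtd.im_neg]
  constructor <;> omega

section twoColoredMutation

variable {n : ℕ} (C : Matrix (Fin n) (Fin n) (Zsqrtd 1)) {k i j : Fin n}

lemma twoColoredMutation_apply_of_eq (h : i = k ∨ j = k) :
    twoColoredMutation C k i j = -C i j :=
  if_pos h

lemma twoColoredMutation_apply_of_ne (hi : i ≠ k) (hj : j ≠ k) :
    twoColoredMutation C k i j =
      C i j + (C i k).posPart * (C k j).posPart - (C i k).negPart * (C k j).negPart :=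
  if_neg (not_or.mpr ⟨hi, hj⟩)

end twoColoredMutation

theorem twoColoredMutation_involutive_general {n : ℕ} (C : Matrix (Fin n) (Fin n) (Zsqrtd 1))
    (k : Fin n) :
    twoColoredMutation (twoColoredMutation C k) k = C := by
  funext i j
  by_cases h : i = k ∨ j = k
  · rw [twoColoredMutation_apply_of_eq _ h, twoColoredMutation_apply_of_eq _ h, neg_neg]
  · obtain ⟨hi, hj⟩ := not_or.mp h
    rw [twoColoredMutation_apply_of_ne _ hi hj, twoColoredMutation_apply_of_ne _ hi hj,
      twoColoredMutation_apply_of_eq _ (Or.inr rfl), twoColoredMutation_apply_of_eq _ (Or.inl rfl),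
      Zsqrtd.posPart_neg, Zsqrtd.posPart_neg, Zsqrtd.negPart_neg, Zsqrtd.negPart_neg]
    ring

/-- Mutation of 2-colored exchange matrices is an involution on skew-symmetric
matrices over the split-complex integers. -/
theorem twoColoredMutation_involutive {n : ℕ} (C : Matrix (Fin n) (Fin n) (Zsqrtd 1))
    (hC : ∀ i j, C j i = -C i j) (k : Fin n) :
    twoColoredMutation (twoColoredMutation C k) k = C :=
  twoColoredMutation_involutive_general C k
end

section
/- Unfolding intertwines 2-colored mutation with group mutation: if C is a skew-symmetric n×n matrix over 𝕐 and k is any index, then the unfolding Ū(C) is a skew-symmetric 2n×2n integer matrix whose (k, k+n) entry is 0, and μ_{k+n}( μ_k( Ū(C) ) ) = Ū( μ_k(C) ). -/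
/-- Mutation at index `k` of an integer matrix over an arbitrary index type. -/
def intMutation {ι : Type*} [DecidableEq ι] (B : Matrix ι ι ℤ) (k : ι) :
    Matrix ι ι ℤ :=
  fun i j =>
    if i = k ∨ j = k then -B i j
    else B i j + max (B i k) 0 * max (B k j) 0 - min (B i k) 0 * min (B k j) 0

/-- The unfolding of a matrix `C = A + εB` over the split-complex integers is the
`2n×2n` integer block matrix `[[A, B], [B, A]]`; the partner of index `Sum.inl k`
is `Sum.inr k` (i.e. `k + n`). -/
def unfoldMatrix {n : ℕ} (C : Matrix (Fin n) (Fin n) (Zsqrtd 1)) :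
    Matrix (Fin n ⊕ Fin n) (Fin n ⊕ Fin n) ℤ :=
  Matrix.fromBlocks (fun i j => (C i j).re) (fun i j => (C i j).im)
    (fun i j => (C i j).im) (fun i j => (C i j).re)

/-!
Since `C` is skew-symmetric, `C k k = 0`, so the unfolding has zero entries between `k` and its
partner `k + n`. Mutations at two such unlinked indices do not interact: neither changes the row or
column of the other, so the composite just adds both correction terms `x⁺y⁺ − x⁻y⁻`. On the other
side, `ε² = 1` splits the correction term of `μ_k(C)` into real and `ε`-parts which are exactly
these two integer correction terms, read off in the blocks of the unfolding.
-/

def mutationTerm (x y : ℤ) : ℤ := max x 0 * max y 0 - min x 0 * min y 0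

theorem intMutation_apply_of_ne {ι : Type*} [DecidableEq ι] (B : Matrix ι ι ℤ) {k i j : ι}
    (hi : i ≠ k) (hj : j ≠ k) :
    intMutation B k i j = B i j + mutationTerm (B i k) (B k j) := by
  simp only [intMutation, mutationTerm, hi, hj, or_self, if_false]
  ring

theorem intMutation_apply_of_eq {ι : Type*} [DecidableEq ι] (B : Matrix ι ι ℤ) {k i j : ι}
    (h : i = k ∨ j = k) : intMutation B k i j = -B i j := if_pos h

theorem intMutation_intMutation_apply {ι : Type*} [DecidableEq ι] (B : Matrix ι ι ℤ) {k l : ι}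
    (hkl : k ≠ l) (hBkl : B k l = 0) (hBlk : B l k = 0) (i j : ι) :
    intMutation (intMutation B k) l i j =
      if i = k ∨ i = l ∨ j = k ∨ j = l then -B i j
      else B i j + mutationTerm (B i k) (B k j) + mutationTerm (B i l) (B l j) := by
  have hrow : ∀ j, intMutation B k l j = if j = k then -B l j else B l j := by
    intro j
    split_ifs with hj
    · exact intMutation_apply_of_eq B (Or.inr hj)
    · simp [intMutation_apply_of_ne B hkl.symm hj, hBlk, mutationTerm]
  have hcol : ∀ i, intMutation B k i l = if i = k then -B i l else B i l := by
    intro i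
    split_ifs with hi
    · exact intMutation_apply_of_eq B (Or.inl hi)
    · simp [intMutation_apply_of_ne B hi hkl.symm, hBkl, mutationTerm]
  by_cases hil : i = l ∨ j = l
  · rw [intMutation_apply_of_eq _ hil, if_pos (by tauto)]
    rcases hil with rfl | rfl
    · rw [hrow]
      split_ifs with hjk
      · simp [hjk, hBlk]
      · rfl
    · rw [hcol]
      split_ifs with hik
      · simp [hik, hBkl]
      · rfl
  push Not at hil
  rw [intMutation_apply_of_ne _ hil.1 hil.2, hrow, hcol]
  by_cases hik : i = k ∨ j = k
  · rcases hik with rfl | rfl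
    · simp [intMutation_apply_of_eq, hBkl, mutationTerm]
    · simp [intMutation_apply_of_eq, hBlk, mutationTerm]
  · push Not at hik
    simp [intMutation_apply_of_ne _ hik.1 hik.2, hik, hil]

theorem Zsqrtd.eq_zero_of_eq_neg {d : ℤ} {z : ℤ√d} (h : z = -z) : z = 0 := by
  have hre := congrArg Zsqrtd.re h
  have him := congrArg Zsqrtd.im h
  simp only [Zsqrtd.re_neg, Zsqrtd.im_neg] at hre him
  ext <;> simp only [Zsqrtd.re_zero, Zsqrtd.im_zero] <;> omega

theorem Zsqrtd.re_posPart_mul_sub_negPart_mul (z w : ℤ√1) :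
    (z.posPart * w.posPart - z.negPart * w.negPart).re =
      mutationTerm z.re w.re + mutationTerm z.im w.im := by
  simp only [Zsqrtd.posPart, Zsqrtd.negPart, Zsqrtd.re_sub, Zsqrtd.re_mul, mutationTerm]
  ring

theorem Zsqrtd.im_posPart_mul_sub_negPart_mul (z w : ℤ√1) :
    (z.posPart * w.posPart - z.negPart * w.negPart).im =
      mutationTerm z.re w.im + mutationTerm z.im w.re := by
  simp only [Zsqrtd.posPart, Zsqrtd.negPart, Zsqrtd.im_sub, Zsqrtd.im_mul, mutationTerm]
  ring

open scoped Matrix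

section unfold

variable {n : ℕ} (C : Matrix (Fin n) (Fin n) (Zsqrtd 1))

@[simp] theorem unfoldMatrix_inl_inl (i j : Fin n) :
    unfoldMatrix C (Sum.inl i) (Sum.inl j) = (C i j).re := rfl

@[simp] theorem unfoldMatrix_inl_inr (i j : Fin n) :
    unfoldMatrix C (Sum.inl i) (Sum.inr j) = (C i j).im := rfl

@[simp] theorem unfoldMatrix_inr_inl (i j : Fin n) :
    unfoldMatrix C (Sum.inr i) (Sum.inl j) = (C i j).im := rfl

@[simp] theorem unfoldMatrix_inr_inr (i j : Fin n) :
    unfoldMatrix C (Sum.inr i) (Sum.inr j) = (C i j).re := rfl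

theorem unfoldMatrix_transpose : unfoldMatrix Cᵀ = (unfoldMatrix C)ᵀ := by
  ext (i | i) (j | j) <;> rfl

theorem unfoldMatrix_neg : unfoldMatrix (-C) = -unfoldMatrix C := by
  ext (i | i) (j | j) <;> rfl

theorem unfoldMatrix_twoColoredMutation_apply (k : Fin n) (p q : Fin n ⊕ Fin n) :
    unfoldMatrix (twoColoredMutation C k) p q =
      if p = .inl k ∨ p = .inr k ∨ q = .inl k ∨ q = .inr k then -unfoldMatrix C p q
      else unfoldMatrix C p q
        + mutationTerm (unfoldMatrix C p (.inl k)) (unfoldMatrix C (.inl k) q)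
        + mutationTerm (unfoldMatrix C p (.inr k)) (unfoldMatrix C (.inr k) q) := by
  rcases p with i | i <;> rcases q with j | j <;>
    simp only [unfoldMatrix_inl_inl, unfoldMatrix_inl_inr, unfoldMatrix_inr_inl,
      unfoldMatrix_inr_inr, twoColoredMutation, Sum.inl.injEq, Sum.inr.injEq, reduceCtorEq,
      or_false, false_or, ← or_assoc] <;>
    split_ifs <;>
    simp only [Zsqrtd.re_neg, Zsqrtd.im_neg, add_sub_assoc, Zsqrtd.re_add, Zsqrtd.im_add,
      Zsqrtd.re_posPart_mul_sub_negPart_mul, Zsqrtd.im_posPart_mul_sub_negPart_mul] <;>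
    ring

end unfold

/-- Unfolding intertwines 2-colored mutation with group mutation: for a skew-symmetric
matrix `C` over `𝕐`, the unfolding is skew-symmetric with vanishing `(k, k+n)` entry,
and mutating the unfolding at `k` and then at its partner `k+n` gives the unfolding of
the mutation of `C` at `k`. -/
theorem unfold_intertwines_mutation {n : ℕ} (C : Matrix (Fin n) (Fin n) (Zsqrtd 1))
    (hC : ∀ i j, C j i = -C i j) (k : Fin n) :
    (∀ i j, unfoldMatrix C j i = -unfoldMatrix C i j) ∧
    unfoldMatrix C (Sum.inl k) (Sum.inr k) = 0 ∧
    intMutation (intMutation (unfoldMatrix C) (Sum.inl k)) (Sum.inr k)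
      = unfoldMatrix (twoColoredMutation C k) := by
  have hCt : Cᵀ = -C := Matrix.ext fun i j => hC i j
  have hU (p q) : unfoldMatrix C q p = -unfoldMatrix C p q := by
    have h := congrFun₂ (unfoldMatrix_transpose C) p q
    rw [hCt, unfoldMatrix_neg] at h
    exact h.symm
  have hkk : unfoldMatrix C (.inl k) (.inr k) = 0 := by
    rw [unfoldMatrix_inl_inr, Zsqrtd.eq_zero_of_eq_neg (hC k k), Zsqrtd.im_zero]
  refine ⟨hU, hkk, ?_⟩
  ext p q
  rw [intMutation_intMutation_apply _ Sum.inl_ne_inr hkk (by rw [hU, hkk, neg_zero]),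
    unfoldMatrix_twoColoredMutation_apply]
end

section
/- Weaving classification: let C and C′ be skew-symmetric n×n matrices over 𝕐 and suppose there is a permutation ψ of the 2n indices of the unfoldings such that Ū(C′)_{ψ(i),ψ(j)} = Ū(C)_{i,j} for all i, j, and ψ maps each pair {k, k+n} of partner indices onto a pair of partner indices. Then there exist a permutation π of {1,…,n} and a function f : {1,…,n} → ℤ/2ℤ such that C′_{π(i),π(j)} = ε^{f(i)+f(j)} · C_{i,j} for all i, j. -/
open Zsqrtd

section SumSelf

variable {α : Type*}

def baseIndex : α ⊕ α → α := Sum.elim id id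

def block : α ⊕ α → ZMod 2 := Sum.elim 0 1

theorem baseIndex_eq_baseIndex_iff {x y : α ⊕ α} :
    baseIndex x = baseIndex y ↔ x = y ∨ x = y.swap := by
  rcases x with a | a <;> rcases y with b | b <;> simp [baseIndex]

end SumSelf

theorem sqrtd_pow_mul_self (k : ℕ) : (sqrtd : ℤ√1) ^ k * sqrtd ^ k = 1 := by
  rw [← mul_pow, dmuld, Int.cast_one, one_pow]

theorem mk_unfoldMatrix {n : ℕ} (C : Matrix (Fin n) (Fin n) (ℤ√1)) (x y : Fin n ⊕ Fin n) :
    (⟨unfoldMatrix C x y, unfoldMatrix C x y.swap⟩ : ℤ√1) =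
      sqrtd ^ (block x + block y).val * C (baseIndex x) (baseIndex y) := by
  have h1 : (1 : ZMod 2).val = 1 := rfl
  have h11 : ((1 : ZMod 2) + 1).val = 0 := rfl
  rcases x with a | a <;> rcases y with b | b <;>
    simp only [block, baseIndex, Sum.swap_inl, Sum.swap_inr, Sum.elim_inl, Sum.elim_inr,
      Pi.zero_apply, Pi.one_apply, add_zero, zero_add, ZMod.val_zero, h1, h11, pow_zero, pow_one,
      id_eq, one_mul, Zsqrtd.ext_iff, re_mul, im_mul, re_sqrtd, im_sqrtd, zero_mul, mul_one] <;>
    exact ⟨rfl, rfl⟩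

theorem weaving_classification_general {n : ℕ}
    (C C' : Matrix (Fin n) (Fin n) (Zsqrtd 1))
    (ψ : Equiv.Perm (Fin n ⊕ Fin n))
    (hψ : ∀ i j, unfoldMatrix C' (ψ i) (ψ j) = unfoldMatrix C i j)
    (hpartner : ∀ i, ψ (Sum.swap i) = Sum.swap (ψ i)) :
    ∃ (π : Equiv.Perm (Fin n)) (f : Fin n → ZMod 2),
      ∀ i j, C' (π i) (π j) = (⟨0, 1⟩ : Zsqrtd 1) ^ (f i + f j).val * C i j := by
  set π₀ : Fin n → Fin n := fun k => baseIndex (ψ (.inl k))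
  set f : Fin n → ZMod 2 := fun k => block (ψ (.inl k))
  have hπ₀ : Function.Injective π₀ := by
    intro i j hij
    rcases baseIndex_eq_baseIndex_iff.mp hij with h | h
    · simpa using ψ.injective h
    · rw [← hpartner, Sum.swap_inl] at h
      simpa using ψ.injective h
  refine ⟨.ofBijective π₀ hπ₀.bijective_of_finite, f, fun i j => ?_⟩
  have hentry : C i j = sqrtd ^ (f i + f j).val * C' (π₀ i) (π₀ j) :=
    calc C i j = ⟨unfoldMatrix C (.inl i) (.inl j), unfoldMatrix C (.inl i) (.inr j)⟩ := by
          simpa [block, baseIndex] using (mk_unfoldMatrix C (.inl i) (.inl j)).symm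
      _ = _ := by rw [← hψ, ← hψ, ← Sum.swap_inl, hpartner, mk_unfoldMatrix]
  change C' (π₀ i) (π₀ j) = sqrtd ^ (f i + f j).val * C i j
  rw [hentry, ← mul_assoc, sqrtd_pow_mul_self, one_mul]

/-- Weaving classification: if the unfoldings of two skew-symmetric matrices over `𝕐`
are identified by a permutation `ψ` of the `2n` indices which maps partner pairs
to partner pairs, then there is a permutation `π` of `{1,…,n}` and a function
`f : {1,…,n} → ℤ/2ℤ` with `C′_{π(i),π(j)} = ε^{f(i)+f(j)} · C_{i,j}` for all `i, j`. -/
theorem weaving_classification {n : ℕ}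
    (C C' : Matrix (Fin n) (Fin n) (Zsqrtd 1))
    (hC : ∀ i j, C j i = -C i j) (hC' : ∀ i j, C' j i = -C' i j)
    (ψ : Equiv.Perm (Fin n ⊕ Fin n))
    (hψ : ∀ i j, unfoldMatrix C' (ψ i) (ψ j) = unfoldMatrix C i j)
    (hpartner : ∀ i, ψ (Sum.swap i) = Sum.swap (ψ i)) :
    ∃ (π : Equiv.Perm (Fin n)) (f : Fin n → ZMod 2),
      ∀ i j, C' (π i) (π j) = (⟨0, 1⟩ : Zsqrtd 1) ^ (f i + f j).val * C i j :=
  weaving_classification_general C C' ψ hψ hpartner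
end

section
/- In a locally transitive tournament all local orders induce one common cyclic order: if r is a locally transitive tournament on a finite set V with |V| = N ≥ 1, then there exists a bijection φ : V → ℤ/Nℤ such that for all u ∈ V and all w ≠ u, r(u,w) holds if and only if the representative of φ(w) − φ(u) in {1,…,N−1} is at most the out-degree |Out(u)| of u; equivalently, the out-neighborhood of each vertex consists exactly of its |Out(u)| immediate cyclic successors. -/
/-- `r` is a tournament on `V`: an irreflexive relation such that for all distinct
`u, w` exactly one of `r u w` and `r w u` holds. -/
def IsTournament {V : Type*} (r : V → V → Prop) : Prop :=
  (∀ v, ¬ r v v) ∧ ∀ u w, u ≠ w → (r u w ↔ ¬ r w u)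

/-- A tournament is locally transitive if for every vertex `v` the restriction of `r`
to the in-neighborhood `In(v) = {u : r u v}` and to the out-neighborhood
`Out(v) = {u : r v u}` are both transitive. -/
def IsLocallyTransitive {V : Type*} (r : V → V → Prop) : Prop :=
  ∀ v, (∀ a b c, r a v → r b v → r c v → r a b → r b c → r a c) ∧
       (∀ a b c, r v a → r v b → r v c → r a b → r b c → r a c)

/-!
Each out-neighbourhood `Out(u)` is linearly ordered by `r`; let `succ u` be its source (the
element beating the rest of `Out(u)`), or the source of `In(u)` if `u` is a sink. If `x ∈ Out(u)`
and `m` is the source of `Out(u) ∩ Out(x)`, then `m` is also the source of `Out(x)`: a vertex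
`z ∈ Out(x) \ Out(u)` beating `m` would give `z → u → x` inside `In(m)`, contradicting `x → z`.
Hence the iterates `succ u, succ² u, …` run through `Out(u)` from top to bottom, so `Out(u)` is
exactly `{succ^k u : 1 ≤ k ≤ |Out(u)|}`. It follows that `succ` is injective and, as any two
vertices are joined by an arc, a single cycle of length `N`; numbering `V` along it gives `φ`.
-/

open Function Set

namespace IsTournament

variable {V : Type*} {r : V → V → Prop} {u w : V}

theorem irrefl (h : IsTournament r) (v : V) : ¬ r v v := h.1 v

theorem ne_of_rel (h : IsTournament r) (huw : r u w) : u ≠ w := fun he => h.1 u (he ▸ huw)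

theorem asymm (h : IsTournament r) (huw : r u w) : ¬ r w u :=
  (h.2 u w (h.ne_of_rel huw)).mp huw

theorem rel_of_not_rel (h : IsTournament r) (hne : u ≠ w) (hwu : ¬ r w u) : r u w :=
  (h.2 u w hne).mpr hwu

theorem rel_or_rel (h : IsTournament r) (hne : u ≠ w) : r u w ∨ r w u :=
  or_iff_not_imp_right.mpr (h.rel_of_not_rel hne)

theorem ncard_setOf_rel_lt [Finite V] (h : IsTournament r) (u : V) :
    {x | r u x}.ncard < Nat.card V := by
  rw [← ncard_univ]
  refine ncard_lt_ncard (ssubset_univ_iff.mpr fun he => h.irrefl u ?_)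
  exact (he ▸ mem_univ u : u ∈ {x | r u x})

end IsTournament

namespace Tournament

variable {V : Type*} {r : V → V → Prop}

def IsSource (r : V → V → Prop) (s : Set V) (m : V) : Prop :=
  m ∈ s ∧ ∀ x ∈ s, x ≠ m → r m x

theorem IsSource.eq (htour : IsTournament r) {s : Set V} {m m' : V} (hm : IsSource r s m)
    (hm' : IsSource r s m') : m = m' := by
  by_contra hne
  exact htour.asymm (hm.2 m' hm'.1 (Ne.symm hne)) (hm'.2 m hm.1 hne)

theorem exists_isSource [Finite V] (htour : IsTournament r) {s : Set V} (hs : s.Nonempty)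
    (htrans : ∀ a ∈ s, ∀ b ∈ s, ∀ c ∈ s, r a b → r b c → r a c) : ∃ m, IsSource r s m := by
  -- a vertex whose set of victims in `s` is maximal for inclusion beats all of `s`
  obtain ⟨m, hm, hmax⟩ := s.toFinite.exists_maximalFor (fun m => {y ∈ s | r m y}) s hs
  refine ⟨m, hm, fun x hx hxm => htour.rel_of_not_rel (Ne.symm hxm) fun hxm' => ?_⟩
  have hsub : {y ∈ s | r m y} ⊆ {y ∈ s | r x y} :=
    fun y ⟨hy, hmy⟩ => ⟨hy, htrans x hx m hm y hy hxm' hmy⟩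
  exact htour.irrefl m (hmax hx hsub ⟨hm, hxm'⟩).2

/-- A sink comes last in the cyclic order, so its successor is the source of `In(u)`. -/
noncomputable def succ (r : V → V → Prop) (u : V) : V :=
  open scoped Classical in
  if h : ∃ m, IsSource r {x | r u x} m then h.choose
  else if h' : ∃ m, IsSource r {x | r x u} m then h'.choose else u

theorem isSource_of_isSource_inter (htour : IsTournament r) (hloc : IsLocallyTransitive r)
    {u x m : V} (hux : r u x) (hm : IsSource r {z | r u z ∧ r x z} m) :
    IsSource r {z | r x z} m := by
  refine ⟨hm.1.2, fun z hxz hzm => ?_⟩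
  by_cases huz : r u z
  · exact hm.2 z ⟨huz, hxz⟩ hzm
  have hzu : r z u := htour.rel_of_not_rel (fun he => htour.asymm hux (he ▸ hxz)) huz
  by_contra hmz
  -- otherwise `z`, `u`, `x` all beat `m`, and transitivity on `In(m)` gives `r z x`
  exact htour.asymm hxz ((hloc m).1 z u x (htour.rel_of_not_rel hzm hmz) hm.1.1 hm.1.2 hzu hux)

variable [Finite V]

theorem isSource_succ_of_rel (htour : IsTournament r) (hloc : IsLocallyTransitive r) {u : V}
    (hout : ∃ x, r u x) : IsSource r {x | r u x} (succ r u) := by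
  have hex := exists_isSource (s := {x | r u x}) htour hout fun a ha b hb c hc => (hloc u).2 a b c ha hb hc
  rw [succ, dif_pos hex]
  exact hex.choose_spec

theorem isSource_succ_of_forall_not_rel (htour : IsTournament r) (hloc : IsLocallyTransitive r)
    {u : V} (hout : ∀ x, ¬ r u x) (hin : ∃ x, r x u) : IsSource r {x | r x u} (succ r u) := by
  have hex := exists_isSource (s := {x | r x u}) htour hin fun a ha b hb c hc => (hloc u).1 a b c ha hb hc
  have hno : ¬ ∃ m, IsSource r {x | r u x} m := fun ⟨m, hm, _⟩ => hout m hm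
  rw [succ, dif_neg hno, dif_pos hex]
  exact hex.choose_spec

theorem succ_injective (htour : IsTournament r) (hloc : IsLocallyTransitive r) :
    Injective (succ r) := by
  suffices h : ∀ a b, r a b → succ r a ≠ succ r b by
    intro a b he
    by_contra hne
    rcases htour.rel_or_rel hne with hab | hba
    exacts [h a b hab he, h b a hba he.symm]
  intro a b hab he
  have hsa := isSource_succ_of_rel htour hloc ⟨b, hab⟩
  by_cases hout : ∃ x, r b x
  · have hsb := isSource_succ_of_rel htour hloc hout
    rw [← he] at hsb
    exact htour.asymm hsb.1 (hsa.2 b hab (htour.ne_of_rel hsb.1))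
  · have hsb := isSource_succ_of_forall_not_rel htour hloc (not_exists.mp hout) ⟨a, hab⟩
    rw [← he] at hsb
    exact htour.asymm hsa.1 (hsb.2 a hab (htour.ne_of_rel hsa.1))

theorem succ_mem_and_setOf_succ_eq (htour : IsTournament r) (hloc : IsLocallyTransitive r)
    {u x : V} (hx : x = u ∨ r u x) (hne : {z | r u z ∧ r x z}.Nonempty) :
    succ r x ∈ {z | r u z ∧ r x z} ∧
      {z | r u z ∧ r (succ r x) z} = {z | r u z ∧ r x z} \ {succ r x} := by
  obtain ⟨m, hm⟩ := exists_isSource htour hne fun a ha b hb c hc => (hloc u).2 a b c ha.1 hb.1 hc.1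
  have hxm : succ r x = m := by
    refine (isSource_succ_of_rel htour hloc ⟨m, hm.1.2⟩).eq htour ?_
    rcases hx with rfl | hux
    · simpa only [and_self] using hm
    · exact isSource_of_isSource_inter htour hloc hux hm
  subst hxm
  refine ⟨hm.1, Set.ext fun z => ⟨fun ⟨huz, hmz⟩ => ⟨⟨huz, ?_⟩, ?_⟩,
    fun ⟨hz, hzm⟩ => ⟨hz.1, hm.2 z hz hzm⟩⟩⟩
  · rcases hx with rfl | hux
    exacts [huz, (hloc u).2 x _ z hux hm.1.1 huz hm.1.2 hmz]
  · exact (htour.ne_of_rel hmz).symm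

theorem iterate_succ_rel_and_ncard (htour : IsTournament r) (hloc : IsLocallyTransitive r)
    (u : V) {k : ℕ} (hk : k ≤ {x | r u x}.ncard) :
    ((succ r)^[k] u = u ∨ r u ((succ r)^[k] u)) ∧
      {z | r u z ∧ r ((succ r)^[k] u) z}.ncard + k = {x | r u x}.ncard := by
  induction k with
  | zero => simp only [iterate_zero_apply, and_self, true_or, add_zero]
  | succ k ih =>
    obtain ⟨hx, hcard⟩ := ih (by omega)
    obtain ⟨hmem, heq⟩ := succ_mem_and_setOf_succ_eq htour hloc hx
      (nonempty_of_ncard_ne_zero (by omega))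
    have := ncard_sdiff_singleton_add_one hmem
    rw [iterate_succ_apply', heq]
    exact ⟨Or.inr hmem.1, by omega⟩

theorem rel_iff_exists_iterate_succ (htour : IsTournament r) (hloc : IsLocallyTransitive r)
    (u w : V) :
    r u w ↔ ∃ k, 1 ≤ k ∧ k ≤ {x | r u x}.ncard ∧ (succ r)^[k] u = w := by
  refine ⟨fun huw => ?_, fun ⟨k, hk1, hkd, hkw⟩ => ?_⟩
  · by_contra! hnot
    -- each step removes only `succ^[k + 1] u` from `Out(u) ∩ Out(succ^[k] u)`, so `w` would
    -- survive until this set is empty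
    have hmem : ∀ k ≤ {x | r u x}.ncard, w ∈ {z | r u z ∧ r ((succ r)^[k] u) z} := by
      intro k hk
      induction k with
      | zero => exact ⟨huw, huw⟩
      | succ k ih =>
        obtain ⟨hx, hcard⟩ := iterate_succ_rel_and_ncard htour hloc u (k := k) (by omega)
        have heq := (succ_mem_and_setOf_succ_eq htour hloc hx
          (nonempty_of_ncard_ne_zero (by omega))).2
        rw [iterate_succ_apply', heq]
        exact ⟨ih (by omega), fun hw => hnot (k + 1) (by omega) hk (by rw [iterate_succ_apply']; exact hw.symm)⟩
    have hd := (iterate_succ_rel_and_ncard htour hloc u le_rfl).2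
    rw [Nat.add_eq_right, ncard_eq_zero] at hd
    exact (hd ▸ hmem _ le_rfl : w ∈ (∅ : Set V))
  · obtain ⟨hx, hcard⟩ := iterate_succ_rel_and_ncard htour hloc u hkd
    refine hkw ▸ hx.resolve_left fun hu => ?_
    rw [hu] at hcard
    simp only [and_self] at hcard
    omega

end Tournament

namespace Function

variable {V : Type*} {f : V → V}

theorem Injective.exists_iterate_eq_of_iterate_eq [Finite V] (hf : Injective f) {u w : V} {k : ℕ}
    (h : f^[k] w = u) : ∃ j, f^[j] u = w := by
  obtain ⟨p, hp, hpw⟩ := hf.mem_periodicPts w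
  refine ⟨p * k - k, ?_⟩
  rw [← h, ← iterate_add_apply, Nat.sub_add_cancel (Nat.le_mul_of_pos_left k hp),
    (hpw.mul_const k).eq]

theorem exists_equiv_zmod_of_forall_iterate_eq [Finite V] {v₀ : V} (hv₀ : v₀ ∈ periodicPts f)
    (hsurj : ∀ w, ∃ k, f^[k] v₀ = w) :
    ∃ φ : V ≃ ZMod (Nat.card V), ∀ v, φ (f v) = φ v + 1 := by
  set p := minimalPeriod f v₀
  have : NeZero p := ⟨(minimalPeriod_pos_of_mem_periodicPts hv₀).ne'⟩
  let ψ : ZMod p → V := fun k => f^[k.val] v₀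
  have hψ_natCast (k : ℕ) : ψ k = f^[k] v₀ := by
    simp only [ψ, ZMod.val_natCast]
    exact iterate_mod_minimalPeriod_eq
  have hψ : Bijective ψ := by
    refine ⟨fun a b hab => ZMod.val_injective p
      (iterate_injOn_Iio_minimalPeriod (ZMod.val_lt a) (ZMod.val_lt b) hab), fun w => ?_⟩
    obtain ⟨k, rfl⟩ := hsurj w
    exact ⟨k, hψ_natCast k⟩
  have hcard : Nat.card V = p := by rw [← Nat.card_congr (Equiv.ofBijective ψ hψ), Nat.card_zmod]
  rw [hcard]
  refine ⟨(Equiv.ofBijective ψ hψ).symm, fun v => ?_⟩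
  obtain ⟨k, rfl⟩ := hψ.2 v
  rw [Equiv.symm_apply_eq, Equiv.ofBijective_symm_apply_apply, Equiv.ofBijective_apply,
    ← ZMod.natCast_zmod_val k, ← Nat.cast_succ, hψ_natCast, hψ_natCast, iterate_succ_apply']

section CyclicLabel

variable {N : ℕ} {φ : V ≃ ZMod N}

theorem apply_iterate_eq_add (hφ : ∀ v, φ (f v) = φ v + 1) (k : ℕ) (v : V) :
    φ (f^[k] v) = φ v + k := by
  induction k with
  | zero => simp
  | succ k ih => rw [iterate_succ_apply', hφ, ih]; push_cast; ring

theorem val_sub_apply_iterate (hφ : ∀ v, φ (f v) = φ v + 1) {k : ℕ} (hk : k < N) (u : V) :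
    (φ (f^[k] u) - φ u).val = k := by
  rw [apply_iterate_eq_add hφ, add_sub_cancel_left, ZMod.val_cast_of_lt hk]

theorem iterate_val_sub [NeZero N] (hφ : ∀ v, φ (f v) = φ v + 1) (u w : V) :
    f^[(φ w - φ u).val] u = w :=
  φ.injective (by rw [apply_iterate_eq_add hφ, ZMod.natCast_zmod_val, add_sub_cancel])

end CyclicLabel

end Function

namespace Tournament

variable {V : Type*} [Finite V] {r : V → V → Prop}

theorem exists_iterate_succ_eq (htour : IsTournament r) (hloc : IsLocallyTransitive r)
    (u w : V) : ∃ k, (succ r)^[k] u = w := by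
  rcases eq_or_ne u w with rfl | hne
  · exact ⟨0, rfl⟩
  rcases htour.rel_or_rel hne with huw | hwu
  · obtain ⟨k, -, -, hk⟩ := (rel_iff_exists_iterate_succ htour hloc u w).mp huw
    exact ⟨k, hk⟩
  · obtain ⟨k, -, -, hk⟩ := (rel_iff_exists_iterate_succ htour hloc w u).mp hwu
    exact (succ_injective htour hloc).exists_iterate_eq_of_iterate_eq hk

end Tournament

open Tournament in
/-- In a locally transitive tournament, all the local orders induce one common cyclic
order: there is a bijection `φ : V → ℤ/Nℤ` such that for `w ≠ u`, `r u w` holds iff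
the representative of `φ(w) − φ(u)` in `{1,…,N−1}` is at most the out-degree of `u`;
i.e. the out-neighborhood of each vertex consists exactly of its immediate cyclic
successors. -/
theorem locallyTransitive_common_cyclic_order {V : Type*} [Fintype V]
    (r : V → V → Prop) (htour : IsTournament r) (hloc : IsLocallyTransitive r)
    (N : ℕ) (hN : Nat.card V = N) (hN1 : 1 ≤ N) :
    ∃ φ : V ≃ ZMod N, ∀ u w : V, w ≠ u →
      (r u w ↔ (φ w - φ u).val ≤ Nat.card {x : V // r u x}) := by
  subst hN
  have : NeZero (Nat.card V) := ⟨by omega⟩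
  obtain ⟨v₀⟩ := (Nat.card_pos_iff.mp hN1).1
  obtain ⟨φ, hφ⟩ := exists_equiv_zmod_of_forall_iterate_eq
    ((succ_injective htour hloc).mem_periodicPts v₀) (exists_iterate_succ_eq htour hloc v₀)
  refine ⟨φ, fun u w hwu => ?_⟩
  change r u w ↔ _ ≤ {x | r u x}.ncard
  rw [rel_iff_exists_iterate_succ htour hloc]
  constructor
  · rintro ⟨k, -, hkd, rfl⟩
    rwa [val_sub_apply_iterate hφ (hkd.trans_lt (htour.ncard_setOf_rel_lt u))]
  · intro hle
    refine ⟨_, Nat.pos_of_ne_zero fun h0 => hwu ?_, hle, iterate_val_sub hφ u w⟩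
    rw [← iterate_val_sub hφ u w, h0, iterate_zero_apply]
end

section
/- In a locally transitive tournament, the colors of the edges at one vertex determine a unique admissible coloring: if r is a locally transitive tournament on a finite set V, v₀ ∈ V, and c₀ assigns an element of ℤ/2ℤ to each pair {v₀, u} with u ≠ v₀, then there exists exactly one admissible coloring c of the tournament with c{v₀,u} = c₀{v₀,u} for all u ≠ v₀. In particular every locally transitive tournament admits an admissible coloring. -/
/-- The restriction of `r` to `{i, j, k}` is a directed 3-cycle. -/
def IsCycle3 {V : Type*} (r : V → V → Prop) (i j k : V) : Prop :=
  (r i j ∧ r j k ∧ r k i) ∨ (r i k ∧ r k j ∧ r j i)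

/-- The restriction of `r` to `{i, j, k}` is transitive, i.e. has a source and a
sink (some ordering `a, b, c` of `i, j, k` has `r a b`, `r b c`, `r a c`). -/
def IsTrans3 {V : Type*} (r : V → V → Prop) (i j k : V) : Prop :=
  (r i j ∧ r j k ∧ r i k) ∨ (r i k ∧ r k j ∧ r i j) ∨ (r j i ∧ r i k ∧ r j k) ∨
  (r j k ∧ r k i ∧ r j i) ∨ (r k i ∧ r i j ∧ r k j) ∨ (r k j ∧ r j i ∧ r k i)

/-- A (symmetric) `ℤ/2ℤ`-coloring of the pairs of distinct vertices is admissible if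
on every directed 3-cycle the colors sum to `0` and on every transitive triple they
sum to `1`. -/
def IsAdmissibleColoring {V : Type*} (r : V → V → Prop) (c : V → V → ZMod 2) : Prop :=
  ∀ i j k : V, i ≠ j → j ≠ k → i ≠ k →
    (IsCycle3 r i j k → c i j + c j k + c i k = 0) ∧
    (IsTrans3 r i j k → c i j + c j k + c i k = 1)

/-! Let `t(i,j,k) ∈ ℤ/2` be `1` on transitive triples and `0` on cyclic ones, so that a coloring
is admissible iff `c i j + c j k + c i k = t(i,j,k)` on distinct triples. In a locally transitive
tournament no vertex dominates, or is dominated by, a 3-cycle, and a 4-vertex tournament with an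
odd number of 3-cycles has such a vertex; hence `t` sums to `0` over the four triangles of any
four vertices. Consequently `t(i,j,k) = t(v₀,i,j) + t(v₀,j,k) + t(v₀,i,k)`, and
`c u w = c₀ u + c₀ w + t(v₀,u,w)` (with `c₀ v₀ := 0`) is admissible. Uniqueness comes from the
triangle `v₀, u, w`, which forces the value of `c u w`. -/

section

variable {V : Type*} {r : V → V → Prop}

theorem IsTournament.asymm_s6 (htour : IsTournament r) {u w : V} (h : r u w) : ¬ r w u := by
  have huw : u ≠ w := by rintro rfl; exact htour.1 u h
  exact (htour.2 u w huw).mp h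

theorem IsTournament.isCycle3_iff_not_isTrans3 (htour : IsTournament r) {i j k : V}
    (hij : i ≠ j) (hjk : j ≠ k) (hik : i ≠ k) : IsCycle3 r i j k ↔ ¬ IsTrans3 r i j k := by
  have := htour.2 i j hij
  have := htour.2 j k hjk
  have := htour.2 i k hik
  by_cases r i j <;> by_cases r j k <;> by_cases r i k <;> simp_all [IsCycle3, IsTrans3]

theorem isTrans3_swap_left (i j k : V) : IsTrans3 r i j k ↔ IsTrans3 r j i k := by
  unfold IsTrans3; tauto

theorem isTrans3_swap_right (i j k : V) : IsTrans3 r i j k ↔ IsTrans3 r i k j := by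
  unfold IsTrans3; tauto

theorem not_isTrans3_self_left (hirr : ∀ v, ¬ r v v) (i k : V) : ¬ IsTrans3 r i i k := by
  unfold IsTrans3; have := hirr i; tauto

theorem not_isTrans3_self_right (hirr : ∀ v, ¬ r v v) (i j : V) : ¬ IsTrans3 r i j i := by
  unfold IsTrans3; have := hirr i; tauto

variable (r) in
open Classical in
noncomputable def transIndicator (i j k : V) : ZMod 2 :=
  if IsTrans3 r i j k then 1 else 0

theorem transIndicator_swap_left (i j k : V) :
    transIndicator r i j k = transIndicator r j i k := by
  classical exact if_congr (isTrans3_swap_left i j k) rfl rfl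

theorem transIndicator_swap_right (i j k : V) :
    transIndicator r i j k = transIndicator r i k j := by
  classical exact if_congr (isTrans3_swap_right i j k) rfl rfl

theorem transIndicator_self_left (hirr : ∀ v, ¬ r v v) (i k : V) :
    transIndicator r i i k = 0 := by
  simp [transIndicator, not_isTrans3_self_left hirr]

theorem transIndicator_self_right (hirr : ∀ v, ¬ r v v) (i j : V) :
    transIndicator r i j i = 0 := by
  simp [transIndicator, not_isTrans3_self_right hirr]

theorem IsTournament.isAdmissibleColoring_iff (htour : IsTournament r) (c : V → V → ZMod 2) :
    IsAdmissibleColoring r c ↔ ∀ i j k : V, i ≠ j → j ≠ k → i ≠ k →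
      c i j + c j k + c i k = transIndicator r i j k := by
  refine forall₄_congr fun i j k hij => forall₂_congr fun hjk hik => ?_
  rw [htour.isCycle3_iff_not_isTrans3 hij hjk hik]
  by_cases h : IsTrans3 r i j k <;> simp [transIndicator, h]

theorem IsLocallyTransitive.not_out_of_isCycle3 (htour : IsTournament r)
    (hloc : IsLocallyTransitive r) {p a b c : V} (hcyc : IsCycle3 r a b c) :
    ¬ (r p a ∧ r p b ∧ r p c) := by
  rintro ⟨ha, hb, hc⟩
  rcases hcyc with ⟨hab, hbc, hca⟩ | ⟨hac, hcb, hba⟩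
  · exact htour.asymm_s6 hca ((hloc p).2 a b c ha hb hc hab hbc)
  · exact htour.asymm_s6 hba ((hloc p).2 a c b ha hc hb hac hcb)

theorem IsLocallyTransitive.not_in_of_isCycle3 (htour : IsTournament r)
    (hloc : IsLocallyTransitive r) {p a b c : V} (hcyc : IsCycle3 r a b c) :
    ¬ (r a p ∧ r b p ∧ r c p) := by
  rintro ⟨ha, hb, hc⟩
  rcases hcyc with ⟨hab, hbc, hca⟩ | ⟨hac, hcb, hba⟩
  · exact htour.asymm_s6 hca ((hloc p).1 a b c ha hb hc hab hbc)
  · exact htour.asymm_s6 hba ((hloc p).1 a c b ha hc hb hac hcb)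

theorem IsLocallyTransitive.transIndicator_sum_four (htour : IsTournament r)
    (hloc : IsLocallyTransitive r) {a b c d : V}
    (hab : a ≠ b) (hac : a ≠ c) (had : a ≠ d) (hbc : b ≠ c) (hbd : b ≠ d) (hcd : c ≠ d) :
    transIndicator r a b c + transIndicator r a b d + transIndicator r a c d +
      transIndicator r b c d = 0 := by
  have := htour.2 a b hab
  have := htour.2 a c hac
  have := htour.2 a d had
  have := htour.2 b c hbc
  have := htour.2 b d hbd
  have := htour.2 c d hcd
  have := hloc.not_out_of_isCycle3 htour (p := a) (a := b) (b := c) (c := d)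
  have := hloc.not_out_of_isCycle3 htour (p := b) (a := a) (b := c) (c := d)
  have := hloc.not_out_of_isCycle3 htour (p := c) (a := a) (b := b) (c := d)
  have := hloc.not_out_of_isCycle3 htour (p := d) (a := a) (b := b) (c := c)
  have := hloc.not_in_of_isCycle3 htour (p := a) (a := b) (b := c) (c := d)
  have := hloc.not_in_of_isCycle3 htour (p := b) (a := a) (b := c) (c := d)
  have := hloc.not_in_of_isCycle3 htour (p := c) (a := a) (b := b) (c := d)
  have := hloc.not_in_of_isCycle3 htour (p := d) (a := a) (b := b) (c := c)
  unfold transIndicator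
  by_cases r a b <;> by_cases r a c <;> by_cases r a d <;> by_cases r b c <;>
    by_cases r b d <;> by_cases r c d <;> simp_all [IsCycle3, IsTrans3] <;> decide

theorem IsLocallyTransitive.transIndicator_eq_sum_at (htour : IsTournament r)
    (hloc : IsLocallyTransitive r) (v : V) {i j k : V}
    (hij : i ≠ j) (hjk : j ≠ k) (hik : i ≠ k) :
    transIndicator r i j k =
      transIndicator r v i j + transIndicator r v j k + transIndicator r v i k := by
  have hself_left := transIndicator_self_left htour.1 (r := r)
  have hself_right := transIndicator_self_right htour.1 (r := r)
  by_cases hi : v = i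
  · subst hi; simp [hself_left]
  by_cases hj : v = j
  · subst hj; simp [hself_left, hself_right, transIndicator_swap_left i v k]
  by_cases hk : v = k
  · subst hk; simp [hself_right, transIndicator_swap_right i j v, transIndicator_swap_left i v j]
  have := hloc.transIndicator_sum_four htour hi hj hk hij hik hjk
  grind

theorem IsLocallyTransitive.exists_isAdmissibleColoring (htour : IsTournament r)
    (hloc : IsLocallyTransitive r) (v : V) (c₀ : V → ZMod 2) :
    ∃ c : V → V → ZMod 2, (∀ u w, c u w = c w u) ∧ IsAdmissibleColoring r c ∧
      ∀ u, u ≠ v → c v u = c₀ u := by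
  classical
  set d := Function.update c₀ v 0
  refine ⟨fun u w => d u + d w + transIndicator r v u w, fun u w => ?_, ?_, fun u hu => ?_⟩
  · dsimp only
    rw [transIndicator_swap_right v u w, add_comm (d u)]
  · refine (htour.isAdmissibleColoring_iff _).2 fun i j k hij hjk hik => ?_
    rw [hloc.transIndicator_eq_sum_at htour v hij hjk hik]
    grind
  · simp [d, hu, transIndicator_self_left htour.1]

theorem IsTournament.eq_of_isAdmissibleColoring (htour : IsTournament r) (v : V)
    {c c' : V → V → ZMod 2} (hsymm : ∀ u w, c u w = c w u) (hsymm' : ∀ u w, c' u w = c' w u)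
    (hadm : IsAdmissibleColoring r c) (hadm' : IsAdmissibleColoring r c')
    (hv : ∀ u, u ≠ v → c v u = c' v u) {u w : V} (huw : u ≠ w) : c u w = c' u w := by
  by_cases hu : u = v
  · subst hu; exact hv w huw.symm
  by_cases hw : w = v
  · subst hw; rw [hsymm, hsymm', hv u hu]
  have h := (htour.isAdmissibleColoring_iff c).1 hadm v u w (Ne.symm hu) huw (Ne.symm hw)
  have h' := (htour.isAdmissibleColoring_iff c').1 hadm' v u w (Ne.symm hu) huw (Ne.symm hw)
  rw [hv u hu, hv w hw, ← h'] at h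
  exact add_left_cancel (add_right_cancel h)

end

theorem admissible_coloring_exists_unique_general {V : Type*}
    (r : V → V → Prop) (htour : IsTournament r) (hloc : IsLocallyTransitive r)
    (v₀ : V) (c₀ : V → ZMod 2) :
    ∃ c : V → V → ZMod 2,
      ((∀ u w, c u w = c w u) ∧ IsAdmissibleColoring r c ∧
        (∀ u, u ≠ v₀ → c v₀ u = c₀ u)) ∧
      ∀ c' : V → V → ZMod 2,
        ((∀ u w, c' u w = c' w u) ∧ IsAdmissibleColoring r c' ∧
          (∀ u, u ≠ v₀ → c' v₀ u = c₀ u)) →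
        ∀ u w, u ≠ w → c' u w = c u w := by
  obtain ⟨c, hsymm, hadm, hv⟩ := hloc.exists_isAdmissibleColoring htour v₀ c₀
  refine ⟨c, ⟨hsymm, hadm, hv⟩, fun c' ⟨hsymm', hadm', hv'⟩ u w huw => ?_⟩
  exact htour.eq_of_isAdmissibleColoring v₀ hsymm' hsymm hadm' hadm
    (fun u hu => (hv' u hu).trans (hv u hu).symm) huw

/-- In a locally transitive tournament, the colors of the edges at one vertex
determine a unique admissible coloring: given `v₀` and prescribed colors `c₀` on the
pairs `{v₀, u}`, there is exactly one symmetric admissible coloring extending `c₀`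
(uniqueness holding on all pairs of distinct vertices). In particular every locally
transitive tournament admits an admissible coloring. -/
theorem admissible_coloring_exists_unique {V : Type*} [Fintype V]
    (r : V → V → Prop) (htour : IsTournament r) (hloc : IsLocallyTransitive r)
    (v₀ : V) (c₀ : V → ZMod 2) :
    ∃ c : V → V → ZMod 2,
      ((∀ u w, c u w = c w u) ∧ IsAdmissibleColoring r c ∧
        (∀ u, u ≠ v₀ → c v₀ u = c₀ u)) ∧
      ∀ c' : V → V → ZMod 2,
        ((∀ u w, c' u w = c' w u) ∧ IsAdmissibleColoring r c' ∧
          (∀ u, u ≠ v₀ → c' v₀ u = c₀ u)) →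
        ∀ u w, u ≠ w → c' u w = c u w :=
  admissible_coloring_exists_unique_general r htour hloc v₀ c₀
end

section
/- Any two admissible colorings of the same locally transitive tournament are related by weaving: if c and c′ are admissible colorings of a locally transitive tournament on a finite set V, then there exists f : V → ℤ/2ℤ such that c′{u,w} = c{u,w} + f(u) + f(w) for all distinct u, w ∈ V. -/
theorem IsTournament.isCycle3_or_isTrans3 {V : Type*} {r : V → V → Prop}
    (htour : IsTournament r) {i j k : V} (hij : i ≠ j) (hjk : j ≠ k) (hik : i ≠ k) :
    IsCycle3 r i j k ∨ IsTrans3 r i j k := by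
  have total : ∀ {a b : V}, a ≠ b → r a b ∨ r b a := fun {a b} hab =>
    or_iff_not_imp_left.mpr (htour.2 b a hab.symm).mpr
  rcases total hij with h₁ | h₁ <;> rcases total hjk with h₂ | h₂ <;>
    rcases total hik with h₃ | h₃ <;> unfold IsCycle3 IsTrans3 <;> tauto

theorem IsAdmissibleColoring.add_triangle_eq_zero {V : Type*} {r : V → V → Prop}
    {c c' : V → V → ZMod 2} (htour : IsTournament r) (hadm : IsAdmissibleColoring r c)
    (hadm' : IsAdmissibleColoring r c') {i j k : V} (hij : i ≠ j) (hjk : j ≠ k)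
    (hik : i ≠ k) : (c + c') i j + (c + c') j k + (c + c') i k = 0 := by
  have h₂ : (2 : ZMod 2) = 0 := rfl
  simp only [Pi.add_apply]
  rcases htour.isCycle3_or_isTrans3 hij hjk hik with h | h
  · linear_combination (hadm i j k hij hjk hik).1 h + (hadm' i j k hij hjk hik).1 h
  · linear_combination (hadm i j k hij hjk hik).2 h + (hadm' i j k hij hjk hik).2 h + h₂

theorem exists_eq_add_of_triangle_eq_zero {V R : Type*} [Ring R] [CharP R 2]
    (d : V → V → R) (hsymm : ∀ u w, d u w = d w u)
    (hcocycle : ∀ {i j k}, i ≠ j → j ≠ k → i ≠ k → d i j + d j k + d i k = 0) :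
    ∃ f : V → R, ∀ u w, u ≠ w → d u w = f u + f w := by
  classical
  rcases isEmpty_or_nonempty V with hV | ⟨⟨v₀⟩⟩
  · exact ⟨0, fun u => hV.elim u⟩
  refine ⟨fun u => if u = v₀ then 0 else d u v₀, fun u w huw => ?_⟩
  by_cases hu : u = v₀
  · subst hu
    simp [huw.symm, hsymm u w]
  by_cases hw : w = v₀
  · subst hw
    simp [hu]
  simp only [hu, hw, if_false]
  have hcycle : d u w + (d u v₀ + d w v₀) = 0 := by
    rw [← add_assoc, add_right_comm]
    exact hcocycle huw hw hu
  rw [eq_neg_of_add_eq_zero_left hcycle, CharTwo.neg_eq]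

theorem admissible_colorings_weaving_related_general {V : Type*}
    (r : V → V → Prop) (htour : IsTournament r)
    (c c' : V → V → ZMod 2)
    (hsym : ∀ u w, c u w = c w u) (hsym' : ∀ u w, c' u w = c' w u)
    (hadm : IsAdmissibleColoring r c) (hadm' : IsAdmissibleColoring r c') :
    ∃ f : V → ZMod 2, ∀ u w : V, u ≠ w → c' u w = c u w + f u + f w := by
  obtain ⟨f, hf⟩ := exists_eq_add_of_triangle_eq_zero (c + c')
    (fun u w => by simp only [Pi.add_apply, hsym u w, hsym' u w])
    (hadm.add_triangle_eq_zero htour hadm')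
  refine ⟨f, fun u w huw => ?_⟩
  have hsum : c u w + c' u w = f u + f w := hf u w huw
  linear_combination hsum - CharTwo.add_self_eq_zero (c u w)

/-- Any two admissible colorings of the same locally transitive tournament are
related by weaving: there is `f : V → ℤ/2ℤ` with
`c′{u,w} = c{u,w} + f(u) + f(w)` for all distinct `u, w`. -/
theorem admissible_colorings_weaving_related {V : Type*} [Fintype V]
    (r : V → V → Prop) (htour : IsTournament r) (hloc : IsLocallyTransitive r)
    (c c' : V → V → ZMod 2)
    (hsym : ∀ u w, c u w = c w u) (hsym' : ∀ u w, c' u w = c' w u)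
    (hadm : IsAdmissibleColoring r c) (hadm' : IsAdmissibleColoring r c') :
    ∃ f : V → ZMod 2, ∀ u w : V, u ≠ w → c' u w = c u w + f u + f w :=
  admissible_colorings_weaving_related_general r htour c c' hsym hsym' hadm hadm'
end

section
/- Norms of canonical labels are multiplicative: let x₁ and x₂ be units of R with central σ-fixed norms. Then N(σ(x₁)) = N(τ(x₁)) = N(x₁), and for every ℓ ∈ {0,1} the element x₁·(σ∘τ)^ℓ(x₂) is a unit with central σ-fixed norm equal to N(x₁)·N(x₂). -/
/-- The norm `N(x) = x · τ(x)`. -/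
def Nrm {R : Type*} [Ring R] (τ : R → R) (x : R) : R := x * τ x

/-- `x` has central `σ`-fixed norm: `N(x)` lies in the center of `R` and is fixed
by `σ`. -/
def CentralFixedNorm {R : Type*} [Ring R] (σ τ : R → R) (x : R) : Prop :=
  (∀ y, Nrm τ x * y = y * Nrm τ x) ∧ σ (Nrm τ x) = Nrm τ x

lemma isUnit_antihom {R : Type*} [Ring R] (f : R → R)
    (hmul : ∀ x y, f (x * y) = f y * f x) (hone : f 1 = 1)
    {x : R} (h : IsUnit x) : IsUnit (f x) := by
  obtain ⟨u, rfl⟩ := h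
  exact ⟨⟨f u, f (↑u⁻¹),
    by rw [← hmul, u.inv_mul, hone], by rw [← hmul, u.mul_inv, hone]⟩, rfl⟩

/-- Norms of canonical labels are multiplicative: if `x₁, x₂` are units with central
`σ`-fixed norms, then `N(σ(x₁)) = N(τ(x₁)) = N(x₁)`, and for `ℓ ∈ {0,1}` the element
`x₁ · (σ∘τ)^ℓ(x₂)` is a unit with central `σ`-fixed norm equal to `N(x₁) · N(x₂)`. -/
theorem norm_of_canonical_label_multiplicative {R : Type*} [Ring R] (σ τ : R → R)
    (hσadd : ∀ x y, σ (x + y) = σ x + σ y)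
    (hσmul : ∀ x y, σ (x * y) = σ y * σ x)
    (hσone : σ 1 = 1)
    (hσσ : ∀ x, σ (σ x) = x)
    (hτadd : ∀ x y, τ (x + y) = τ x + τ y)
    (hτmul : ∀ x y, τ (x * y) = τ y * τ x)
    (hτone : τ 1 = 1)
    (hττ : ∀ x, τ (τ x) = x)
    (hστ : ∀ x, σ (τ x) = τ (σ x))
    (x₁ x₂ : R) (h₁ : IsUnit x₁) (h₂ : IsUnit x₂)
    (hn₁ : CentralFixedNorm σ τ x₁) (hn₂ : CentralFixedNorm σ τ x₂)
    (ℓ : ℕ) (hℓ : ℓ = 0 ∨ ℓ = 1) :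
    Nrm τ (σ x₁) = Nrm τ x₁ ∧
    Nrm τ (τ x₁) = Nrm τ x₁ ∧
    IsUnit (x₁ * (σ ∘ τ)^[ℓ] x₂) ∧
    CentralFixedNorm σ τ (x₁ * (σ ∘ τ)^[ℓ] x₂) ∧
    Nrm τ (x₁ * (σ ∘ τ)^[ℓ] x₂) = Nrm τ x₁ * Nrm τ x₂ := by
  obtain ⟨hc₁, hf₁⟩ := hn₁
  obtain ⟨hc₂, hf₂⟩ := hn₂
  -- commutation of x with τ x for units with central norm
  have comm₁ : τ x₁ * x₁ = x₁ * τ x₁ := by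
    apply h₁.mul_left_cancel
    have := hc₁ x₁
    simpa [Nrm, mul_assoc] using this
  have comm₂ : τ x₂ * x₂ = x₂ * τ x₂ := by
    apply h₂.mul_left_cancel
    have := hc₂ x₂
    simpa [Nrm, mul_assoc] using this
  have hNσ : Nrm τ (σ x₁) = Nrm τ x₁ := by
    show σ x₁ * τ (σ x₁) = Nrm τ x₁
    rw [← hστ, ← hσmul, comm₁]
    exact hf₁
  have hNτ : Nrm τ (τ x₁) = Nrm τ x₁ := by
    show τ x₁ * τ (τ x₁) = Nrm τ x₁
    rw [hττ, comm₁]; rfl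
  refine ⟨hNσ, hNτ, ?_, ?_, ?_⟩ <;> rcases hℓ with rfl | rfl
  · simpa using h₁.mul h₂
  · simpa using h₁.mul (isUnit_antihom σ hσmul hσone (isUnit_antihom τ hτmul hτone h₂))
  -- norm of the twisted factor equals N x₂
  all_goals
    have hNtw : ∀ y : R, y = (σ ∘ τ)^[0] x₂ ∨ y = (σ ∘ τ)^[1] x₂ →
        Nrm τ y = Nrm τ x₂ := by
      rintro y (rfl | rfl)
      · rfl
      · show σ (τ x₂) * τ (σ (τ x₂)) = Nrm τ x₂
        rw [show τ (σ (τ x₂)) = σ x₂ by rw [← hστ, hττ], ← hσmul]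
        exact hf₂
    have hmulN : ∀ y : R, Nrm τ y = Nrm τ x₂ →
        Nrm τ (x₁ * y) = Nrm τ x₁ * Nrm τ x₂ := by
      intro y hy
      show x₁ * y * τ (x₁ * y) = Nrm τ x₁ * Nrm τ x₂
      rw [hτmul, show x₁ * y * (τ y * τ x₁) = x₁ * (y * τ y) * τ x₁ by simp [mul_assoc],
        show y * τ y = Nrm τ x₂ from hy, show x₁ * Nrm τ x₂ = Nrm τ x₂ * x₁ from (hc₂ x₁).symm,
        mul_assoc, hc₂ (x₁ * τ x₁)]
      rfl
  · -- central σ-fixed norm, ℓ = 0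
    have he := hmulN _ (hNtw _ (Or.inl rfl))
    refine ⟨fun y => ?_, ?_⟩
    · rw [he, mul_assoc, hc₂ y, ← mul_assoc, hc₁ y, mul_assoc]
    · rw [he, hσmul, hf₁, hf₂, hc₂ (Nrm τ x₁)]
  · -- central σ-fixed norm, ℓ = 1
    have he := hmulN _ (hNtw _ (Or.inr rfl))
    refine ⟨fun y => ?_, ?_⟩
    · rw [he, mul_assoc, hc₂ y, ← mul_assoc, hc₁ y, mul_assoc]
    · rw [he, hσmul, hf₁, hf₂, hc₂ (Nrm τ x₁)]
  · exact hmulN _ (hNtw _ (Or.inl rfl))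
  · exact hmulN _ (hNtw _ (Or.inr rfl))
end

section
/- Transition maps compose contravariantly along concatenation: let x₁, x₂ be units of R with central σ-fixed norms that are units, and let ℓ₁, ℓ₂ ∈ {0,1} with sum taken mod 2. Then m_{x₁·(σ∘τ)^{ℓ₁}(x₂), ℓ₁+ℓ₂} = m_{x₂,ℓ₂} ∘ m_{x₁,ℓ₁}. Moreover, for any unit x with central σ-fixed unit norm and any ℓ ∈ {0,1}, setting x̄ = (σ∘τ)^{ℓ+1}(σ(x)) one has m_{x̄,ℓ} ∘ m_{x,ℓ} = id_R; in particular every transition map is a bijection of R. -/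
/-- The transition map `m_{x,ℓ}(u) = N(x)⁻¹ · (σ∘τ)^ℓ(τ(x) · u · σ(τ(x)))`. -/
noncomputable def TransitionMap {R : Type*} [Ring R] (σ τ : R → R) (x : R) (ℓ : ℕ) : R → R :=
  fun u => Ring.inverse (Nrm τ x) * (σ ∘ τ)^[ℓ] (τ x * u * σ (τ x))

set_option linter.unusedSectionVars false

namespace TMaux

variable {R : Type*} [Ring R]

/-- Uniqueness of the inverse of a unit. -/
lemma inv_unique {a b : R} (hu : IsUnit a) (h : b * a = 1) : b = Ring.inverse a := by
  calc b = b * (a * Ring.inverse a) := by rw [Ring.mul_inverse_cancel a hu, mul_one]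
    _ = (b * a) * Ring.inverse a := by rw [mul_assoc]
    _ = Ring.inverse a := by rw [h, one_mul]

/-- The inverse of a central unit is central. -/
lemma inv_central {a : R} (hu : IsUnit a) (hc : ∀ y, a * y = y * a) (y : R) :
    Ring.inverse a * y = y * Ring.inverse a := by
  calc Ring.inverse a * y
      = Ring.inverse a * y * (a * Ring.inverse a) := by
        rw [Ring.mul_inverse_cancel a hu, mul_one]
    _ = Ring.inverse a * (y * a) * Ring.inverse a := by simp [mul_assoc]
    _ = Ring.inverse a * (a * y) * Ring.inverse a := by rw [hc y]
    _ = (Ring.inverse a * a) * (y * Ring.inverse a) := by simp [mul_assoc]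
    _ = y * Ring.inverse a := by rw [Ring.inverse_mul_cancel a hu, one_mul]

/-- A central element jumps over any factor. -/
lemma central_left {c : R} (hc : ∀ y, c * y = y * c) (a b : R) :
    a * (c * b) = c * (a * b) := by
  rw [← mul_assoc, ← hc a, mul_assoc]

section Phi

variable (σ τ : R → R)
  (hσmul : ∀ x y, σ (x * y) = σ y * σ x) (hσone : σ 1 = 1) (hσσ : ∀ x, σ (σ x) = x)
  (hτmul : ∀ x y, τ (x * y) = τ y * τ x) (hτone : τ 1 = 1) (hττ : ∀ x, τ (τ x) = x)
  (hστ : ∀ x, σ (τ x) = τ (σ x))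

include hσσ hττ hστ in
lemma phi_phi : ∀ y, (σ ∘ τ) ((σ ∘ τ) y) = y := by
  intro y
  simp only [Function.comp_apply]
  rw [hστ y, hττ, hσσ]

include hσσ hττ hστ in
lemma phi_iter_parity (n : ℕ) (y : R) : (σ ∘ τ)^[n] y = (σ ∘ τ)^[n % 2] y := by
  have h2 : (σ ∘ τ)^[2] = id := by
    funext z
    simpa [Function.iterate_succ_apply'] using phi_phi σ τ hσσ hττ hστ z
  conv_lhs => rw [← Nat.mod_add_div n 2, Function.iterate_add_apply,
    Function.iterate_mul, h2, Function.iterate_id, id]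

include hσσ hττ hστ in
lemma phi_iter_double (n : ℕ) (y : R) : (σ ∘ τ)^[n] ((σ ∘ τ)^[n] y) = y := by
  rw [← Function.iterate_add_apply, phi_iter_parity σ τ hσσ hττ hστ]
  have : (n + n) % 2 = 0 := by omega
  rw [this]; rfl

include hσmul hτmul in
lemma phi_mul (a b : R) : (σ ∘ τ) (a * b) = (σ ∘ τ) a * (σ ∘ τ) b := by
  simp only [Function.comp_apply, hτmul, hσmul]

include hσmul hτmul in
lemma phi_iter_mul (n : ℕ) (a b : R) :
    (σ ∘ τ)^[n] (a * b) = (σ ∘ τ)^[n] a * (σ ∘ τ)^[n] b := by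
  induction n generalizing a b with
  | zero => rfl
  | succ k ih => simp only [Function.iterate_succ_apply, phi_mul σ τ hσmul hτmul, ih]

include hσone hτone in
lemma phi_iter_one (n : ℕ) : (σ ∘ τ)^[n] (1 : R) = 1 := by
  apply Function.iterate_fixed
  simp only [Function.comp_apply, hτone, hσone]

include hττ hστ in
lemma tau_phi_iter (n : ℕ) (y : R) : τ ((σ ∘ τ)^[n] y) = (σ ∘ τ)^[n] (τ y) := by
  have step : ∀ z, τ ((σ ∘ τ) z) = (σ ∘ τ) (τ z) := by
    intro z
    simp only [Function.comp_apply]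
    rw [← hστ]
  induction n generalizing y with
  | zero => rfl
  | succ k ih =>
    rw [Function.iterate_succ_apply', Function.iterate_succ_apply', step, ih]

include hσσ hστ in
lemma sigma_phi_iter (n : ℕ) (y : R) : σ ((σ ∘ τ)^[n] y) = (σ ∘ τ)^[n] (σ y) := by
  have step : ∀ z, σ ((σ ∘ τ) z) = (σ ∘ τ) (σ z) := by
    intro z
    simp only [Function.comp_apply]
    rw [hσσ, hστ, hσσ]
  induction n generalizing y with
  | zero => rfl
  | succ k ih =>
    rw [Function.iterate_succ_apply', Function.iterate_succ_apply', step, ih]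

end Phi

section Norms

variable (σ τ : R → R)
  (hσmul : ∀ x y, σ (x * y) = σ y * σ x) (hσone : σ 1 = 1) (hσσ : ∀ x, σ (σ x) = x)
  (hτmul : ∀ x y, τ (x * y) = τ y * τ x) (hτone : τ 1 = 1) (hττ : ∀ x, τ (τ x) = x)
  (hστ : ∀ x, σ (τ x) = τ (σ x))

include hτmul hττ in
lemma tau_nrm (x : R) : τ (Nrm τ x) = Nrm τ x := by
  simp only [Nrm, hτmul, hττ]

include hσmul hσone hτmul hτone in
/-- `φ^[n]` of a unit is a unit. -/
lemma isUnit_phi_iter {x : R} (hx : IsUnit x) (n : ℕ) : IsUnit ((σ ∘ τ)^[n] x) := by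
  induction n generalizing x hx with
  | zero => exact hx
  | succ k ih =>
    rw [Function.iterate_succ_apply]
    apply ih
    rcases isUnit_iff_exists.mp hx with ⟨b, hb1, hb2⟩
    apply isUnit_iff_exists.mpr ⟨(σ ∘ τ) b, ?_, ?_⟩
    · rw [← phi_mul σ τ hσmul hτmul, hb1]
      simp only [Function.comp_apply, hτone, hσone]
    · rw [← phi_mul σ τ hσmul hτmul, hb2]
      simp only [Function.comp_apply, hτone, hσone]

include hσmul hσone in
/-- `σ` of a unit is a unit. -/
lemma isUnit_sigma {x : R} (hx : IsUnit x) : IsUnit (σ x) := by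
  rcases isUnit_iff_exists.mp hx with ⟨b, hb1, hb2⟩
  exact isUnit_iff_exists.mpr ⟨σ b, by rw [← hσmul, hb2, hσone], by rw [← hσmul, hb1, hσone]⟩

include hτmul hττ hστ in
/-- `φ^[n]` fixes the norm of an element with central `σ`-fixed norm. -/
lemma phi_iter_nrm (n : ℕ) {x : R} (hn : CentralFixedNorm σ τ x) :
    (σ ∘ τ)^[n] (Nrm τ x) = Nrm τ x := by
  apply Function.iterate_fixed
  simp only [Function.comp_apply]
  rw [tau_nrm τ hτmul hττ, hn.2]

include hτmul hττ in
/-- For a unit with central norm, `τ x * x = N x` as well. -/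
lemma tau_mul_self {x : R} (hx : IsUnit x) (hn : CentralFixedNorm σ τ x) :
    τ x * x = Nrm τ x := by
  apply hx.mul_left_cancel
  calc x * (τ x * x) = (x * τ x) * x := by rw [mul_assoc]
    _ = Nrm τ x * x := rfl
    _ = x * Nrm τ x := hn.1 x

include hσmul hσσ hτmul hττ hστ in
/-- The norm of the reversed label equals the original norm. -/
lemma nrm_bar (k : ℕ) {x : R} (hx : IsUnit x) (hn : CentralFixedNorm σ τ x) :
    Nrm τ ((σ ∘ τ)^[k] (σ x)) = Nrm τ x := by
  have h1 : τ ((σ ∘ τ)^[k] (σ x)) = (σ ∘ τ)^[k] (σ (τ x)) := by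
    rw [tau_phi_iter σ τ hττ hστ, hστ]
  calc Nrm τ ((σ ∘ τ)^[k] (σ x))
      = (σ ∘ τ)^[k] (σ x) * (σ ∘ τ)^[k] (σ (τ x)) := by rw [Nrm, h1]
    _ = (σ ∘ τ)^[k] (σ x * σ (τ x)) := by rw [phi_iter_mul σ τ hσmul hτmul]
    _ = (σ ∘ τ)^[k] (σ (τ x * x)) := by rw [hσmul]
    _ = (σ ∘ τ)^[k] (σ (Nrm τ x)) := by rw [tau_mul_self σ τ hτmul hττ hx hn]
    _ = (σ ∘ τ)^[k] (Nrm τ x) := by rw [hn.2]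
    _ = Nrm τ x := phi_iter_nrm σ τ hτmul hττ hστ k hn

end Norms

section Main

variable (σ τ : R → R)
  (hσmul : ∀ x y, σ (x * y) = σ y * σ x) (hσone : σ 1 = 1) (hσσ : ∀ x, σ (σ x) = x)
  (hτmul : ∀ x y, τ (x * y) = τ y * τ x) (hτone : τ 1 = 1) (hττ : ∀ x, τ (τ x) = x)
  (hστ : ∀ x, σ (τ x) = τ (σ x))

include hσmul hσone hσσ hτmul hτone hττ hστ in
lemma comp_nat (x₁ x₂ : R)
    (hn₁ : CentralFixedNorm σ τ x₁) (hn₂ : CentralFixedNorm σ τ x₂)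
    (hu₁ : IsUnit (Nrm τ x₁)) (hu₂ : IsUnit (Nrm τ x₂))
    (ℓ₁ ℓ₂ : ℕ) :
    TransitionMap σ τ (x₁ * (σ ∘ τ)^[ℓ₁] x₂) (ℓ₁ + ℓ₂)
      = TransitionMap σ τ x₂ ℓ₂ ∘ TransitionMap σ τ x₁ ℓ₁ := by
  set N₁ := Nrm τ x₁ with hN₁def
  set N₂ := Nrm τ x₂ with hN₂def
  set I₁ := Ring.inverse N₁ with hI₁def
  set I₂ := Ring.inverse N₂ with hI₂def
  set X := x₁ * (σ ∘ τ)^[ℓ₁] x₂ with hXdef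
  have hmul : ∀ (n : ℕ) (a b : R), (σ ∘ τ)^[n] (a * b) = (σ ∘ τ)^[n] a * (σ ∘ τ)^[n] b :=
    fun n => phi_iter_mul σ τ hσmul hτmul n
  have hdouble : ∀ (n : ℕ) (z : R), (σ ∘ τ)^[n] ((σ ∘ τ)^[n] z) = z :=
    fun n => phi_iter_double σ τ hσσ hττ hστ n
  -- τ of the concatenated label
  have hτX : τ X = (σ ∘ τ)^[ℓ₁] (τ x₂) * τ x₁ := by
    rw [hXdef, hτmul, tau_phi_iter σ τ hττ hστ]
  have hστX : σ (τ X) = σ (τ x₁) * (σ ∘ τ)^[ℓ₁] (σ (τ x₂)) := by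
    rw [hτX, hσmul, sigma_phi_iter σ τ hσσ hστ]
  -- norm of the concatenated label
  have hNX : Nrm τ X = N₁ * N₂ := by
    calc Nrm τ X = x₁ * (σ ∘ τ)^[ℓ₁] x₂ * ((σ ∘ τ)^[ℓ₁] (τ x₂) * τ x₁) := by rw [Nrm, hτX]
      _ = x₁ * ((σ ∘ τ)^[ℓ₁] x₂ * (σ ∘ τ)^[ℓ₁] (τ x₂)) * τ x₁ := by simp only [mul_assoc]
      _ = x₁ * (σ ∘ τ)^[ℓ₁] (x₂ * τ x₂) * τ x₁ := by rw [hmul]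
      _ = x₁ * (N₂ * τ x₁) := by
          rw [show (σ ∘ τ)^[ℓ₁] (x₂ * τ x₂) = N₂ from phi_iter_nrm σ τ hτmul hττ hστ ℓ₁ hn₂,
            mul_assoc]
      _ = x₁ * (τ x₁ * N₂) := by rw [hn₂.1 (τ x₁)]
      _ = N₁ * N₂ := by rw [← mul_assoc]; rfl
  have hIX : Ring.inverse (Nrm τ X) = I₂ * I₁ := by
    rw [hNX]
    refine (inv_unique (hu₁.mul hu₂) ?_).symm
    calc I₂ * I₁ * (N₁ * N₂) = I₂ * (I₁ * N₁) * N₂ := by simp only [mul_assoc]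
      _ = I₂ * N₂ := by rw [Ring.inverse_mul_cancel N₁ hu₁, mul_one]
      _ = 1 := Ring.inverse_mul_cancel N₂ hu₂
  -- φ^[n] fixes I₁
  have hφN₁ : ∀ n, (σ ∘ τ)^[n] N₁ = N₁ := fun n => phi_iter_nrm σ τ hτmul hττ hστ n hn₁
  have hφI₁ : ∀ n, (σ ∘ τ)^[n] I₁ = I₁ := by
    intro n
    refine inv_unique hu₁ ?_
    calc (σ ∘ τ)^[n] I₁ * N₁ = (σ ∘ τ)^[n] I₁ * (σ ∘ τ)^[n] N₁ := by rw [hφN₁]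
      _ = (σ ∘ τ)^[n] (I₁ * N₁) := (hmul n _ _).symm
      _ = (σ ∘ τ)^[n] 1 := by rw [Ring.inverse_mul_cancel N₁ hu₁]
      _ = 1 := phi_iter_one σ τ hσone hτone n
  have hI₁c : ∀ y, I₁ * y = y * I₁ := inv_central hu₁ hn₁.1
  funext u
  simp only [TransitionMap, Function.comp_apply]
  set B := (σ ∘ τ)^[ℓ₁] (τ x₁ * u * σ (τ x₁)) with hBdef
  have hinner : (σ ∘ τ)^[ℓ₁] (τ X * u * σ (τ X)) = τ x₂ * B * σ (τ x₂) := by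
    rw [hστX, hτX]
    simp only [hBdef, hmul ℓ₁, hdouble ℓ₁, mul_assoc]
  calc Ring.inverse (Nrm τ X) * (σ ∘ τ)^[ℓ₁ + ℓ₂] (τ X * u * σ (τ X))
      = I₂ * I₁ * (σ ∘ τ)^[ℓ₂] ((σ ∘ τ)^[ℓ₁] (τ X * u * σ (τ X))) := by
        rw [hIX, add_comm ℓ₁ ℓ₂, Function.iterate_add_apply]
    _ = I₂ * I₁ * (σ ∘ τ)^[ℓ₂] (τ x₂ * B * σ (τ x₂)) := by rw [hinner]
    _ = I₂ * ((σ ∘ τ)^[ℓ₂] I₁ * (σ ∘ τ)^[ℓ₂] (τ x₂ * B * σ (τ x₂))) := by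
        rw [hφI₁, mul_assoc]
    _ = I₂ * (σ ∘ τ)^[ℓ₂] (I₁ * (τ x₂ * B * σ (τ x₂))) := by
        rw [hmul ℓ₂ I₁ (τ x₂ * B * σ (τ x₂))]
    _ = I₂ * (σ ∘ τ)^[ℓ₂] (τ x₂ * (I₁ * B) * σ (τ x₂)) := by
        rw [central_left hI₁c (τ x₂) B, mul_assoc I₁]

include hσσ hττ hστ in
lemma tmap_parity (x : R) (n : ℕ) :
    TransitionMap σ τ x n = TransitionMap σ τ x (n % 2) := by
  funext u
  simp only [TransitionMap]
  rw [phi_iter_parity σ τ hσσ hττ hστ]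

include hτmul hττ in
lemma tmap_nrm_id {x : R} (hn : CentralFixedNorm σ τ x) (hu : IsUnit (Nrm τ x)) :
    TransitionMap σ τ (Nrm τ x) 0 = id := by
  set N := Nrm τ x with hNdef
  have hτN : τ N = N := tau_nrm τ hτmul hττ x
  have hσN : σ N = N := hn.2
  have hNN : Nrm τ N = N * N := by rw [Nrm, hτN]
  have hcc : ∀ y, (N * N) * y = y * (N * N) := by
    intro y
    calc (N * N) * y = N * (y * N) := by rw [mul_assoc, hn.1 y]
      _ = (N * y) * N := by rw [mul_assoc]
      _ = y * (N * N) := by rw [hn.1 y, mul_assoc]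
  funext u
  simp only [TransitionMap, Function.iterate_zero, id_eq, hNN, hτN, hσN]
  calc Ring.inverse (N * N) * (N * u * N)
      = Ring.inverse (N * N) * (u * (N * N)) := by rw [hn.1 u, mul_assoc]
    _ = u * (N * N) * Ring.inverse (N * N) := inv_central (hu.mul hu) hcc _
    _ = u := Ring.mul_inverse_cancel_right _ u (hu.mul hu)

include hσmul hσone hσσ hτmul hτone hττ hστ in
lemma left_inv (x : R) (ℓ : ZMod 2) (hx : IsUnit x) (hn : CentralFixedNorm σ τ x)
    (hu : IsUnit (Nrm τ x)) :
    TransitionMap σ τ ((σ ∘ τ)^[(ℓ + 1).val] (σ x)) ℓ.val ∘ TransitionMap σ τ x ℓ.val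
      = id := by
  set k := (ℓ + 1).val with hkdef
  set xb := (σ ∘ τ)^[k] (σ x) with hxbdef
  have hnb : Nrm τ xb = Nrm τ x := nrm_bar σ τ hσmul hσσ hτmul hττ hστ k hx hn
  have hcb : CentralFixedNorm σ τ xb := by
    unfold CentralFixedNorm
    rw [hnb]
    exact hn
  have hub : IsUnit (Nrm τ xb) := hnb ▸ hu
  have hcomp := comp_nat σ τ hσmul hσone hσσ hτmul hτone hττ hστ x xb hn hcb hu hub ℓ.val ℓ.val
  have hval : ℓ.val < 2 := ZMod.val_lt ℓ
  have hk1 : (ℓ.val + k) % 2 = 1 := by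
    have h1 : k = (ℓ.val + 1) % 2 := by
      rw [hkdef, ZMod.val_add]
      rfl
    omega
  have hx2 : x * (σ ∘ τ)^[ℓ.val] xb = Nrm τ x := by
    rw [hxbdef, ← Function.iterate_add_apply,
      phi_iter_parity σ τ hσσ hττ hστ (ℓ.val + k), hk1]
    have h2 : (σ ∘ τ)^[1] (σ x) = τ x := by
      simp only [Function.iterate_one, Function.comp_apply]
      rw [hστ, hσσ]
    rw [h2]
    rfl
  rw [← hcomp, hx2, tmap_parity σ τ hσσ hττ hστ,
    show (ℓ.val + ℓ.val) % 2 = 0 by omega]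
  exact tmap_nrm_id σ τ hτmul hττ hn hu

end Main

end TMaux

/-- Transition maps compose contravariantly along concatenation of canonical labels:
`m_{x₁·(σ∘τ)^{ℓ₁}(x₂), ℓ₁+ℓ₂} = m_{x₂,ℓ₂} ∘ m_{x₁,ℓ₁}` (sum of parities mod 2).
Moreover for any unit `x` with central `σ`-fixed unit norm, the transition map of the
reversed label `x̄ = (σ∘τ)^{ℓ+1}(σ(x))` is a left inverse of `m_{x,ℓ}`; in particular
every transition map is a bijection of `R`. -/
theorem transitionMap_comp {R : Type*} [Ring R] (σ τ : R → R)
    (hσadd : ∀ x y, σ (x + y) = σ x + σ y)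
    (hσmul : ∀ x y, σ (x * y) = σ y * σ x)
    (hσone : σ 1 = 1)
    (hσσ : ∀ x, σ (σ x) = x)
    (hτadd : ∀ x y, τ (x + y) = τ x + τ y)
    (hτmul : ∀ x y, τ (x * y) = τ y * τ x)
    (hτone : τ 1 = 1)
    (hττ : ∀ x, τ (τ x) = x)
    (hστ : ∀ x, σ (τ x) = τ (σ x))
    (x₁ x₂ : R) (h₁ : IsUnit x₁) (h₂ : IsUnit x₂)
    (hn₁ : CentralFixedNorm σ τ x₁) (hn₂ : CentralFixedNorm σ τ x₂)
    (hu₁ : IsUnit (Nrm τ x₁)) (hu₂ : IsUnit (Nrm τ x₂))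
    (ℓ₁ ℓ₂ : ZMod 2) :
    TransitionMap σ τ (x₁ * (σ ∘ τ)^[ℓ₁.val] x₂) ((ℓ₁ + ℓ₂).val)
      = TransitionMap σ τ x₂ ℓ₂.val ∘ TransitionMap σ τ x₁ ℓ₁.val ∧
    (∀ (x : R) (ℓ : ZMod 2), IsUnit x → CentralFixedNorm σ τ x → IsUnit (Nrm τ x) →
      TransitionMap σ τ ((σ ∘ τ)^[(ℓ + 1).val] (σ x)) ℓ.val ∘ TransitionMap σ τ x ℓ.val
          = id ∧
      Function.Bijective (TransitionMap σ τ x ℓ.val)) := by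
  constructor
  · have hc := TMaux.comp_nat σ τ hσmul hσone hσσ hτmul hτone hττ hστ x₁ x₂ hn₁ hn₂ hu₁ hu₂
      ℓ₁.val ℓ₂.val
    rw [← hc, TMaux.tmap_parity σ τ hσσ hττ hστ _ ((ℓ₁ + ℓ₂).val),
      TMaux.tmap_parity σ τ hσσ hττ hστ _ (ℓ₁.val + ℓ₂.val)]
    have hv : (ℓ₁ + ℓ₂).val % 2 = (ℓ₁.val + ℓ₂.val) % 2 := by
      rw [ZMod.val_add]
      omega
    rw [hv]
  · intro x ℓ hx hn hu
    have hL := TMaux.left_inv σ τ hσmul hσone hσσ hτmul hτone hττ hστ x ℓ hx hn hu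
    refine ⟨hL, ?_⟩
    set k := (ℓ + 1).val with hkdef
    set xb := (σ ∘ τ)^[k] (σ x) with hxbdef
    have hxbu : IsUnit xb :=
      TMaux.isUnit_phi_iter σ τ hσmul hσone hτmul hτone
        (TMaux.isUnit_sigma σ hσmul hσone hx) k
    have hnb : Nrm τ xb = Nrm τ x := TMaux.nrm_bar σ τ hσmul hσσ hτmul hττ hστ k hx hn
    have hcb : CentralFixedNorm σ τ xb := by
      unfold CentralFixedNorm
      rw [hnb]
      exact hn
    have hub : IsUnit (Nrm τ xb) := hnb ▸ hu
    have hR := TMaux.left_inv σ τ hσmul hσone hσσ hτmul hτone hττ hστ xb ℓ hxbu hcb hub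
    have hxbb : (σ ∘ τ)^[k] (σ xb) = x := by
      rw [hxbdef, TMaux.sigma_phi_iter σ τ hσσ hστ, hσσ, ← Function.iterate_add_apply,
        TMaux.phi_iter_parity σ τ hσσ hττ hστ, show (k + k) % 2 = 0 by omega,
        Function.iterate_zero, id_eq]
    rw [hxbb] at hR
    exact ⟨Function.LeftInverse.injective (g := TransitionMap σ τ xb ℓ.val)
        (fun u => congrFun hL u),
      Function.RightInverse.surjective (g := TransitionMap σ τ xb ℓ.val)
        (fun u => congrFun hR u)⟩
end

section
/- Sliding Lemma: transition maps preserve central symmetric pairings. Let x be a unit of R whose norm N(x) is a central unit fixed by σ, let ℓ ∈ {0,1}, and let m = m_{x,ℓ}. If v, w ∈ R are such that b(v,w) is central and σ(b(v,w)) = b(v,w), then b(m(v), m(w)) = b(v,w). -/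
/-- The symmetric pairing `b(u,v) = u·τ(v) + v·τ(u)`. -/
def Bform {R : Type*} [Ring R] (τ : R → R) (u v : R) : R := u * τ v + v * τ u

/-!
Write `a = τ x`, `c = σ (τ x)`, `n = N(x)` and `ρ = (σ ∘ τ)^ℓ`, so that `m(u) = n⁻¹ · ρ(a u c)`.
As `σ ∘ τ` is a ring endomorphism commuting with `τ` and `n⁻¹` is central and `τ`-fixed,
`b(m v, m w) = n⁻¹ · ρ(b(a v c, a w c)) · n⁻¹`. Left multiplication of both arguments by `a`
conjugates `b` into `a · b · τ(a)`, right multiplication by `c` multiplies it by the central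
element `c · τ(c) = σ(n) = n`. Since `a · τ(a) = τ(x) · x = n` and `b(v,w)` is central, we get
`b(m v, m w) = n⁻¹ · ρ(n · b(v,w) · n) · n⁻¹ = b(v,w)`: both `n` and `b(v,w)` are fixed by `σ` and
`τ`, hence by `ρ`, for every `ℓ`.
-/

theorem IsUnit.mul_comm_of_mul_central {R : Type*} [Ring R] {x y : R} (hx : IsUnit x)
    (h : ∀ z, x * y * z = z * (x * y)) : y * x = x * y :=
  hx.mul_left_cancel (by rw [← mul_assoc]; exact h x)

theorem apply_ring_inverse_self {R : Type*} [Ring R] (f : R → R)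
    (hmul : ∀ x y, f (x * y) = f y * f x) (hone : f 1 = 1) {n : R} (hn : IsUnit n)
    (hfn : f n = n) : f (Ring.inverse n) = Ring.inverse n := by
  obtain ⟨u, rfl⟩ := hn
  rw [Ring.inverse_unit]
  apply Units.eq_inv_of_mul_eq_one_left
  rw [← hfn, ← hmul, Units.inv_mul, hone]

theorem Ring.inverse_mul_comm_of_central {R : Type*} [Ring R] {n : R} (hn : IsUnit n)
    (hc : ∀ y, n * y = y * n) (y : R) : Ring.inverse n * y = y * Ring.inverse n := by
  obtain ⟨u, rfl⟩ := hn
  rw [Ring.inverse_unit]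
  exact Commute.units_inv_left (hc y)

def compRingHom {R : Type*} [Ring R] (σ τ : R → R)
    (hσadd : ∀ x y, σ (x + y) = σ x + σ y) (hσmul : ∀ x y, σ (x * y) = σ y * σ x)
    (hσone : σ 1 = 1) (hτadd : ∀ x y, τ (x + y) = τ x + τ y)
    (hτmul : ∀ x y, τ (x * y) = τ y * τ x) (hτone : τ 1 = 1) : R →+* R :=
  RingHom.mk' ⟨⟨σ ∘ τ, by simp [hτone, hσone]⟩, fun x y => by simp [hτmul, hσmul]⟩
    fun x y => by simp [hτadd, hσadd]

section Bform

variable {R : Type*} [Ring R] (τ : R → R)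

theorem apply_Nrm_self (hτmul : ∀ x y, τ (x * y) = τ y * τ x) (hττ : ∀ x, τ (τ x) = x)
    (x : R) : τ (Nrm τ x) = Nrm τ x := by
  rw [Nrm, hτmul, hττ]

theorem apply_Bform_self (hτadd : ∀ x y, τ (x + y) = τ x + τ y)
    (hτmul : ∀ x y, τ (x * y) = τ y * τ x) (hττ : ∀ x, τ (τ x) = x) (u w : R) :
    τ (Bform τ u w) = Bform τ u w := by
  rw [Bform, hτadd, hτmul, hτmul, hττ, hττ, add_comm]

theorem Bform_mul_left (hτmul : ∀ x y, τ (x * y) = τ y * τ x) (a u w : R) :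
    Bform τ (a * u) (a * w) = a * Bform τ u w * τ a := by
  simp only [Bform, hτmul]
  noncomm_ring

theorem Bform_mul_right (hτmul : ∀ x y, τ (x * y) = τ y * τ x) {c : R}
    (hc : ∀ y, Nrm τ c * y = y * Nrm τ c) (u w : R) :
    Bform τ (u * c) (w * c) = Nrm τ c * Bform τ u w := by
  have key : ∀ p q : R, p * c * τ (q * c) = Nrm τ c * (p * τ q) := fun p q => by
    rw [hτmul, ← mul_assoc, mul_assoc p, show c * τ c = Nrm τ c from rfl, ← hc p, mul_assoc]
  rw [Bform, Bform, key, key, mul_add]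

theorem Bform_map (f : R →+* R) (hf : ∀ y, τ (f y) = f (τ y)) (u w : R) :
    Bform τ (f u) (f w) = f (Bform τ u w) := by
  simp only [Bform, hf, map_add, map_mul]

end Bform

theorem sliding_lemma_general {R : Type*} [Ring R] (σ τ : R → R)
    (hσadd : ∀ x y, σ (x + y) = σ x + σ y)
    (hσmul : ∀ x y, σ (x * y) = σ y * σ x)
    (hσone : σ 1 = 1)
    (hτadd : ∀ x y, τ (x + y) = τ x + τ y)
    (hτmul : ∀ x y, τ (x * y) = τ y * τ x)
    (hτone : τ 1 = 1)
    (hττ : ∀ x, τ (τ x) = x)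
    (hστ : ∀ x, σ (τ x) = τ (σ x))
    (x : R) (hx : IsUnit x) (hn : CentralFixedNorm σ τ x) (hnu : IsUnit (Nrm τ x))
    (ℓ : ℕ)
    (v w : R)
    (hb : (∀ y, Bform τ v w * y = y * Bform τ v w) ∧ σ (Bform τ v w) = Bform τ v w) :
    Bform τ (TransitionMap σ τ x ℓ v) (TransitionMap σ τ x ℓ w) = Bform τ v w := by
  obtain ⟨hnc, hσn⟩ := hn
  set n := Nrm τ x
  set i := Ring.inverse n
  set ρ := compRingHom σ τ hσadd hσmul hσone hτadd hτmul hτone ^ ℓ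
  have hρ : (σ ∘ τ)^[ℓ] = ρ := by rw [RingHom.coe_pow]; rfl
  have hρτ : ∀ y, τ (ρ y) = ρ (τ y) := fun y =>
    hρ ▸ Function.Commute.iterate_right (f := τ) (g := σ ∘ τ) (fun z => by simp [hστ]) ℓ y
  have hρ_fixed : ∀ y, σ y = y → τ y = y → ρ y = y := fun y hσy hτy =>
    hρ ▸ Function.iterate_fixed (by simp [hτy, hσy]) ℓ
  have hτi : τ i = i :=
    apply_ring_inverse_self τ hτmul hτone hnu (apply_Nrm_self τ hτmul hττ x)
  have hNc : Nrm τ (σ (τ x)) = n := by rw [Nrm, ← hστ, hττ, ← hσmul]; exact hσn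
  have ha : τ x * τ (τ x) = n := by rw [hττ]; exact hx.mul_comm_of_mul_central hnc
  have hic : ∀ y, i * y = y * i := Ring.inverse_mul_comm_of_central hnu hnc
  have hin : i * n = 1 := Ring.inverse_mul_cancel _ hnu
  set b := Bform τ v w
  have hρnb : ρ (n * (b * n)) = n * (b * n) := by
    rw [map_mul, map_mul, hρ_fixed n hσn (apply_Nrm_self τ hτmul hττ x),
      hρ_fixed b hb.2 (apply_Bform_self τ hτadd hτmul hττ v w)]
  calc Bform τ (TransitionMap σ τ x ℓ v) (TransitionMap σ τ x ℓ w)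
      = i * ρ (n * (τ x * b * τ (τ x))) * i := by
        unfold TransitionMap
        rw [hρ, Bform_mul_left τ hτmul, hτi, Bform_map τ ρ hρτ,
          Bform_mul_right τ hτmul (hNc ▸ hnc), hNc, Bform_mul_left τ hτmul]
    _ = i * (n * (b * n)) * i := by rw [← hb.1, mul_assoc b, ha, hρnb]
    _ = (i * n) * b * (n * i) := by noncomm_ring
    _ = b := by rw [← hic n, hin, one_mul, mul_one]

/-- Sliding Lemma: transition maps preserve central symmetric pairings. If `b(v,w)`
is central and fixed by `σ`, then `b(m(v), m(w)) = b(v,w)` for any transition map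
`m = m_{x,ℓ}` with `x` a unit whose norm is a central unit fixed by `σ`. -/
theorem sliding_lemma {R : Type*} [Ring R] (σ τ : R → R)
    (hσadd : ∀ x y, σ (x + y) = σ x + σ y)
    (hσmul : ∀ x y, σ (x * y) = σ y * σ x)
    (hσone : σ 1 = 1)
    (hσσ : ∀ x, σ (σ x) = x)
    (hτadd : ∀ x y, τ (x + y) = τ x + τ y)
    (hτmul : ∀ x y, τ (x * y) = τ y * τ x)
    (hτone : τ 1 = 1)
    (hττ : ∀ x, τ (τ x) = x)
    (hστ : ∀ x, σ (τ x) = τ (σ x))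
    (x : R) (hx : IsUnit x) (hn : CentralFixedNorm σ τ x) (hnu : IsUnit (Nrm τ x))
    (ℓ : ℕ) (hℓ : ℓ = 0 ∨ ℓ = 1)
    (v w : R)
    (hb : (∀ y, Bform τ v w * y = y * Bform τ v w) ∧ σ (Bform τ v w) = Bform τ v w) :
    Bform τ (TransitionMap σ τ x ℓ v) (TransitionMap σ τ x ℓ w) = Bform τ v w :=
  sliding_lemma_general σ τ hσadd hσmul hσone hτadd hτmul hτone hττ hστ x hx hn hnu ℓ v w hb
end

section
/- Monodromy around a polygon acts as a reflection: let Δ be a unit of R whose norm N(Δ) is a central unit fixed by σ and which satisfies σ(Δ) = Δ, and let m = m_{Δ,1} be the transition map with ℓ = 1. Then m ∘ m = id_R, m(Δ) = Δ, and for every u ∈ R with σ(u) = u one has N(Δ)·( m(u) + u ) = b(u,Δ)·Δ; equivalently m(u) = −u + N(Δ)⁻¹·b(u,Δ)·Δ. -/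
/-- Monodromy around a polygon acts as a reflection: for a `σ`-fixed unit `Δ` with
central `σ`-fixed unit norm, the transition map `m = m_{Δ,1}` is an involution fixing
`Δ`, and on `σ`-fixed elements `u` one has `N(Δ)·(m(u) + u) = b(u,Δ)·Δ`;
equivalently `m(u) = −u + N(Δ)⁻¹·b(u,Δ)·Δ`. -/
theorem monodromy_is_reflection {R : Type*} [Ring R] (σ τ : R → R)
    (hσadd : ∀ x y, σ (x + y) = σ x + σ y)
    (hσmul : ∀ x y, σ (x * y) = σ y * σ x)
    (hσone : σ 1 = 1)
    (hσσ : ∀ x, σ (σ x) = x)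
    (hτadd : ∀ x y, τ (x + y) = τ x + τ y)
    (hτmul : ∀ x y, τ (x * y) = τ y * τ x)
    (hτone : τ 1 = 1)
    (hττ : ∀ x, τ (τ x) = x)
    (hστ : ∀ x, σ (τ x) = τ (σ x))
    (Δ : R) (hΔ : IsUnit Δ) (hn : CentralFixedNorm σ τ Δ) (hnu : IsUnit (Nrm τ Δ))
    (hfix : σ Δ = Δ) :
    TransitionMap σ τ Δ 1 ∘ TransitionMap σ τ Δ 1 = id ∧
    TransitionMap σ τ Δ 1 Δ = Δ ∧
    (∀ u : R, σ u = u →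
      Nrm τ Δ * (TransitionMap σ τ Δ 1 u + u) = Bform τ u Δ * Δ ∧
      TransitionMap σ τ Δ 1 u = -u + Ring.inverse (Nrm τ Δ) * Bform τ u Δ * Δ) := by
  set N := Nrm τ Δ with hN
  set i := Ring.inverse N with hi
  obtain ⟨hc, hσN⟩ := hn
  have hiN : i * N = 1 := Ring.inverse_mul_cancel N hnu
  have hNi : N * i = 1 := Ring.mul_inverse_cancel N hnu
  have hci : ∀ y : R, i * y = y * i := by
    intro y
    calc i * y = i * y * (N * i) := by rw [hNi, mul_one]
    _ = i * (y * N) * i := by noncomm_ring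
    _ = i * (N * y) * i := by rw [hc]
    _ = (i * N) * (y * i) := by noncomm_ring
    _ = y * i := by rw [hiN, one_mul]
  have hτN : τ N = N := by
    simp only [hN, Nrm, hτmul, hττ]
  have hστN : σ (τ N) = N := by rw [hτN, hσN]
  have hτΔΔ : τ Δ * Δ = N := by
    apply hΔ.mul_left_cancel
    rw [← mul_assoc]
    show Δ * τ Δ * Δ = Δ * N
    rw [show Δ * τ Δ = N from rfl, hc]
  have hστi : σ (τ i) = i := by
    have h1 : σ (τ i) * N = 1 := by
      rw [← hστN, ← hσmul, ← hτmul, hiN, hτone, hσone]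
    calc σ (τ i) = σ (τ i) * (N * i) := by rw [hNi, mul_one]
    _ = (σ (τ i) * N) * i := by rw [mul_assoc]
    _ = i := by rw [h1, one_mul]
  have hστΔ : σ (τ Δ) = τ Δ := by rw [hστ, hfix]
  have hststu : ∀ u : R, σ (τ (σ (τ u))) = u := by
    intro u
    rw [show τ (σ (τ u)) = σ (τ (τ u)) from (hστ (τ u)).symm, hττ, hσσ]
  have hm : ∀ u : R, TransitionMap σ τ Δ 1 u = i * (Δ * σ (τ u) * Δ) := by
    intro u
    show i * (σ ∘ τ)^[1] (τ Δ * u * σ (τ Δ)) = _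
    simp only [Function.iterate_one, Function.comp_apply]
    congr 1
    rw [hστΔ, hτmul, hτmul, hττ, hσmul, hσmul, hfix]
  have hexp : ∀ u : R, σ (τ (i * (Δ * σ (τ u) * Δ))) = i * (τ Δ * u * τ Δ) := by
    intro u
    rw [hτmul, hσmul, hτmul, hσmul, hτmul, hσmul, hστi, hστΔ, hststu]
  have hinv : ∀ u : R, TransitionMap σ τ Δ 1 (TransitionMap σ τ Δ 1 u) = u := by
    intro u
    rw [hm, hm, hexp]
    calc i * (Δ * (i * (τ Δ * u * τ Δ)) * Δ)
        = i * ((Δ * i) * ((τ Δ * u * τ Δ) * Δ)) := by noncomm_ring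
    _ = i * ((i * Δ) * ((τ Δ * u * τ Δ) * Δ)) := by rw [← hci]
    _ = (i * i) * ((Δ * τ Δ) * (u * (τ Δ * Δ))) := by noncomm_ring
    _ = (i * i) * (N * (u * N)) := by rw [hτΔΔ]; rfl
    _ = (i * i) * (N * (N * u)) := by rw [← hc u]
    _ = i * ((i * N) * (N * u)) := by noncomm_ring
    _ = i * (N * u) := by rw [hiN, one_mul]
    _ = (i * N) * u := by rw [mul_assoc]
    _ = u := by rw [hiN, one_mul]
  have hmΔ : TransitionMap σ τ Δ 1 Δ = Δ := by
    rw [hm, hστΔ]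
    calc i * (Δ * τ Δ * Δ) = i * (N * Δ) := rfl
    _ = (i * N) * Δ := by rw [mul_assoc]
    _ = Δ := by rw [hiN, one_mul]
  refine ⟨funext fun u => hinv u, hmΔ, fun u hu => ?_⟩
  have hmu : TransitionMap σ τ Δ 1 u = i * (Δ * τ u * Δ) := by
    rw [hm, hστ, hu]
  have hmain : N * (TransitionMap σ τ Δ 1 u + u) = Bform τ u Δ * Δ := by
    rw [hmu, mul_add]
    have h1 : N * (i * (Δ * τ u * Δ)) = Δ * τ u * Δ := by
      rw [← mul_assoc, hNi, one_mul]
    have h2 : N * u = u * τ Δ * Δ := by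
      rw [hc, mul_assoc, hτΔΔ]
    rw [h1, h2, Bform]
    noncomm_ring
  refine ⟨hmain, ?_⟩
  have h3 : TransitionMap σ τ Δ 1 u + u = i * (Bform τ u Δ * Δ) := by
    have := congrArg (fun z => i * z) hmain
    simpa [← mul_assoc, hiN] using this
  rw [mul_assoc, ← h3]
  abel
end

section
/- Equivalence of the canonical exchange relation and additivity of canonical angles: let i, j, k, ℓ be four distinct labels and for each ordered pair (a,b) of distinct labels let x_{ab} ∈ R be a unit with central σ-fixed norm such that σ(x_{ab}) = x_{ba}. Define the canonical angles Δ_k^{ab} = τ(x_{ak})·x_{ab}·τ(x_{kb}). Then the canonical exchange relation N(x_{ik})·x_{ℓj} = x_{ℓk}·τ(x_{ik})·x_{ij} + x_{ℓi}·τ(x_{ki})·x_{kj} holds if and only if the angle-additivity relation N(x_{ki})·Δ_k^{jℓ} = N(x_{kℓ})·Δ_k^{ji} + N(x_{kj})·Δ_k^{iℓ} holds. -/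
/-!
Apply `σ` to both sides of the exchange relation and conjugate by the units `τ(x_{jk})` on the
left and `τ(x_{kl})` on the right. Since `σ` swaps the indices of each `x_{ab}` and commutes with
`τ`, and since the norms are central, `σ`-fixed and symmetric (`N(x_{ab}) = N(x_{ba})`), the
transformed relation is exactly angle additivity. The transformation is injective because `σ` is
an involution and the conjugating elements are units.
-/

section AntiMultiplicative

variable {R : Type*} [Ring R]

theorem isUnit_apply_of_map_mul_rev {f : R → R} (hmul : ∀ x y, f (x * y) = f y * f x)
    (hone : f 1 = 1) {a : R} (ha : IsUnit a) : IsUnit (f a) :=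
  let φ : R →* Rᵐᵒᵖ :=
    { toFun := fun a => MulOpposite.op (f a)
      map_one' := by rw [hone, MulOpposite.op_one]
      map_mul' := fun a b => by rw [hmul, MulOpposite.op_mul] }
  (ha.map φ).unop

theorem apply_mul_self_eq_nrm {τ : R → R} {x : R} (hx : IsUnit x)
    (hN : ∀ y, Nrm τ x * y = y * Nrm τ x) : τ x * x = Nrm τ x :=
  hx.mul_left_cancel (by rw [← mul_assoc]; exact hN x)

theorem map_nrm {σ τ : R → R} (hσmul : ∀ x y, σ (x * y) = σ y * σ x)
    (hστ : ∀ x, σ (τ x) = τ (σ x)) {x : R} (hx : IsUnit (σ x))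
    (hN : ∀ y, Nrm τ (σ x) * y = y * Nrm τ (σ x)) : σ (Nrm τ x) = Nrm τ (σ x) := by
  rw [Nrm, hσmul, hστ, apply_mul_self_eq_nrm hx hN]

theorem map_mul_apply_mul {σ τ : R → R} (hσmul : ∀ x y, σ (x * y) = σ y * σ x)
    (hστ : ∀ x, σ (τ x) = τ (σ x)) (a b c : R) :
    σ (a * τ b * c) = σ c * τ (σ b) * σ a := by
  rw [hσmul, hσmul, hστ, mul_assoc]

theorem mul_map_mul_inj {σ : R → R} (hσ : Function.Injective σ) {b c : R} (hb : IsUnit b)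
    (hc : IsUnit c) {u v : R} : b * σ u * c = b * σ v * c ↔ u = v := by
  rw [hc.mul_left_inj, hb.mul_right_inj, hσ.eq_iff]

end AntiMultiplicative

section Family

variable {R : Type*} [Ring R] {σ τ : R → R} {ι : Type*} {x : ι → ι → R}

theorem nrm_symm (hσmul : ∀ x y, σ (x * y) = σ y * σ x) (hστ : ∀ x, σ (τ x) = τ (σ x))
    (hunit : ∀ a b, a ≠ b → IsUnit (x a b))
    (hnorm : ∀ a b, a ≠ b → CentralFixedNorm σ τ (x a b))
    (hswap : ∀ a b, a ≠ b → σ (x a b) = x b a) {a b : ι} (hab : a ≠ b) :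
    Nrm τ (x a b) = Nrm τ (x b a) := by
  have hba := hab.symm
  rw [← (hnorm a b hab).2, map_nrm hσmul hστ (by rw [hswap a b hab]; exact hunit b a hba)
    (by rw [hswap a b hab]; exact (hnorm b a hba).1), hswap a b hab]

theorem conj_map_exchange_lhs (hσmul : ∀ x y, σ (x * y) = σ y * σ x)
    (hστ : ∀ x, σ (τ x) = τ (σ x)) (hunit : ∀ a b, a ≠ b → IsUnit (x a b))
    (hnorm : ∀ a b, a ≠ b → CentralFixedNorm σ τ (x a b))
    (hswap : ∀ a b, a ≠ b → σ (x a b) = x b a) {i j k l : ι} (hik : i ≠ k) (hjl : j ≠ l)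
    (a b : R) :
    a * σ (Nrm τ (x i k) * x l j) * b = Nrm τ (x k i) * (a * x j l * b) := by
  have hN := (hnorm i k hik).1
  rw [hσmul, hswap l j hjl.symm, (hnorm i k hik).2, ← nrm_symm hσmul hστ hunit hnorm hswap hik,
    hN (a * x j l * b)]
  simp only [mul_assoc]
  rw [hN b]

theorem conj_map_exchange_rhs (hσadd : ∀ x y, σ (x + y) = σ x + σ y)
    (hσmul : ∀ x y, σ (x * y) = σ y * σ x) (hστ : ∀ x, σ (τ x) = τ (σ x))
    (hunit : ∀ a b, a ≠ b → IsUnit (x a b))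
    (hnorm : ∀ a b, a ≠ b → CentralFixedNorm σ τ (x a b))
    (hswap : ∀ a b, a ≠ b → σ (x a b) = x b a) {i j k l : ι}
    (hij : i ≠ j) (hik : i ≠ k) (hil : i ≠ l) (hjk : j ≠ k) (hkl : k ≠ l) :
    τ (x j k) * σ (x l k * τ (x i k) * x i j + x l i * τ (x k i) * x k j) * τ (x k l)
      = Nrm τ (x k l) * (τ (x j k) * x j i * τ (x k i))
        + Nrm τ (x k j) * (τ (x i k) * x i l * τ (x k l)) := by
  rw [hσadd, mul_add, add_mul, map_mul_apply_mul hσmul hστ, map_mul_apply_mul hσmul hστ,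
    hswap i j hij, hswap i k hik, hswap l k hkl.symm, hswap k j hjk.symm, hswap k i hik.symm,
    hswap l i hil.symm]
  congr 1
  · have hN : x k l * τ (x k l) = Nrm τ (x k l) := rfl
    simp only [mul_assoc, hN, (hnorm k l hkl).1]
  · simp only [← mul_assoc, apply_mul_self_eq_nrm (hunit j k hjk) (hnorm j k hjk).1,
      nrm_symm hσmul hστ hunit hnorm hswap hjk]

end Family

theorem exchange_iff_angle_additivity_general {R : Type*} [Ring R] (σ τ : R → R)
    (hσadd : ∀ x y, σ (x + y) = σ x + σ y)
    (hσmul : ∀ x y, σ (x * y) = σ y * σ x)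
    (hσσ : ∀ x, σ (σ x) = x)
    (hτmul : ∀ x y, τ (x * y) = τ y * τ x)
    (hτone : τ 1 = 1)
    (hστ : ∀ x, σ (τ x) = τ (σ x))
    {ι : Type*} (i j k l : ι)
    (hij : i ≠ j) (hik : i ≠ k) (hil : i ≠ l)
    (hjk : j ≠ k) (hjl : j ≠ l) (hkl : k ≠ l)
    (x : ι → ι → R)
    (hunit : ∀ a b, a ≠ b → IsUnit (x a b))
    (hnorm : ∀ a b, a ≠ b → CentralFixedNorm σ τ (x a b))
    (hswap : ∀ a b, a ≠ b → σ (x a b) = x b a) :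
    (Nrm τ (x i k) * x l j
        = x l k * τ (x i k) * x i j + x l i * τ (x k i) * x k j) ↔
    (Nrm τ (x k i) * (τ (x j k) * x j l * τ (x k l))
        = Nrm τ (x k l) * (τ (x j k) * x j i * τ (x k i))
          + Nrm τ (x k j) * (τ (x i k) * x i l * τ (x k l))) := by
  have hσinj : Function.Injective σ := Function.LeftInverse.injective hσσ
  have hτunit : ∀ a b, a ≠ b → IsUnit (τ (x a b)) := fun a b hab =>
    isUnit_apply_of_map_mul_rev hτmul hτone (hunit a b hab)
  rw [← mul_map_mul_inj hσinj (hτunit j k hjk) (hτunit k l hkl),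
    conj_map_exchange_lhs hσmul hστ hunit hnorm hswap hik hjl,
    conj_map_exchange_rhs hσadd hσmul hστ hunit hnorm hswap hij hik hil hjk hkl]

/-- Equivalence of the canonical exchange relation and additivity of canonical
angles: for four distinct labels `i, j, k, l` and units `x a b` (for distinct
labels `a, b`) with central `σ`-fixed norm and `σ(x a b) = x b a`, setting
`Δ_k^{ab} = τ(x a k) · x a b · τ(x k b)`, the canonical exchange relation
`N(x i k) · x l j = x l k · τ(x i k) · x i j + x l i · τ(x k i) · x k j` holds
iff `N(x k i) · Δ_k^{jl} = N(x k l) · Δ_k^{ji} + N(x k j) · Δ_k^{il}` holds. -/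
theorem exchange_iff_angle_additivity {R : Type*} [Ring R] (σ τ : R → R)
    (hσadd : ∀ x y, σ (x + y) = σ x + σ y)
    (hσmul : ∀ x y, σ (x * y) = σ y * σ x)
    (hσone : σ 1 = 1)
    (hσσ : ∀ x, σ (σ x) = x)
    (hτadd : ∀ x y, τ (x + y) = τ x + τ y)
    (hτmul : ∀ x y, τ (x * y) = τ y * τ x)
    (hτone : τ 1 = 1)
    (hττ : ∀ x, τ (τ x) = x)
    (hστ : ∀ x, σ (τ x) = τ (σ x))
    {ι : Type*} (i j k l : ι)
    (hij : i ≠ j) (hik : i ≠ k) (hil : i ≠ l)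
    (hjk : j ≠ k) (hjl : j ≠ l) (hkl : k ≠ l)
    (x : ι → ι → R)
    (hunit : ∀ a b, a ≠ b → IsUnit (x a b))
    (hnorm : ∀ a b, a ≠ b → CentralFixedNorm σ τ (x a b))
    (hswap : ∀ a b, a ≠ b → σ (x a b) = x b a) :
    (Nrm τ (x i k) * x l j
        = x l k * τ (x i k) * x i j + x l i * τ (x k i) * x k j) ↔
    (Nrm τ (x k i) * (τ (x j k) * x j l * τ (x k l))
        = Nrm τ (x k l) * (τ (x j k) * x j i * τ (x k i))
          + Nrm τ (x k j) * (τ (x i k) * x i l * τ (x k l))) :=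
  exchange_iff_angle_additivity_general σ τ hσadd hσmul hσσ hτmul hτone hστ i j k l hij hik hil hjk
    hjl hkl x hunit hnorm hswap
end

section
/- The map σ_e is a linear anti-involution of the Clifford algebra commuting with reversal and fixing the twisted embedding of the module: σ_e is R-linear, σ_e(1) = 1, σ_e(x·y) = σ_e(y)·σ_e(x) for all x, y in the Clifford algebra, σ_e ∘ σ_e = id, σ_e ∘ reverse = reverse ∘ σ_e, and σ_e( ι(e)·ι(v) ) = ι(e)·ι(v) for every v ∈ M. -/
open CliffordAlgebra

noncomputable def sigmaE {R M : Type*} [CommRing R] [AddCommGroup M] [Module R M]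
    (Q : QuadraticForm R M) (e : M) (x : CliffordAlgebra Q) : CliffordAlgebra Q :=
  Ring.inverse (Q e) • (ι Q e * reverse x * ι Q e)

/-- `σ_e` is a linear anti-involution of the Clifford algebra commuting with
reversal and fixing the twisted embedding `v ↦ ι(e)·ι(v)` of the module. -/
theorem sigmaE_antiinvolution {R M : Type*} [CommRing R] [AddCommGroup M]
    [Module R M] (Q : QuadraticForm R M) (e : M) (he : IsUnit (Q e)) :
    (∀ x y : CliffordAlgebra Q, sigmaE Q e (x + y) = sigmaE Q e x + sigmaE Q e y) ∧
    (∀ (r : R) (x : CliffordAlgebra Q), sigmaE Q e (r • x) = r • sigmaE Q e x) ∧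
    sigmaE Q e 1 = 1 ∧
    (∀ x y : CliffordAlgebra Q, sigmaE Q e (x * y) = sigmaE Q e y * sigmaE Q e x) ∧
    (∀ x : CliffordAlgebra Q, sigmaE Q e (sigmaE Q e x) = x) ∧
    (∀ x : CliffordAlgebra Q, sigmaE Q e (reverse x) = reverse (sigmaE Q e x)) ∧
    (∀ v : M, sigmaE Q e (ι Q e * ι Q v) = ι Q e * ι Q v) := by
  have hinv : Ring.inverse (Q e) * Q e = 1 := Ring.inverse_mul_cancel _ he
  have hsq : ι Q e * ι Q e = algebraMap R (CliffordAlgebra Q) (Q e) := ι_sq_scalar Q e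
  have key : ∀ a b : CliffordAlgebra Q,
      (ι Q e * a * ι Q e) * (ι Q e * b * ι Q e) = Q e • (ι Q e * (a * b) * ι Q e) := by
    intro a b
    simp only [mul_assoc]
    rw [← mul_assoc (ι Q e) (ι Q e) (b * ι Q e), hsq, ← Algebra.smul_def]
    simp only [mul_smul_comm]
  refine ⟨?_, ?_, ?_, ?_, ?_, ?_, ?_⟩
  · intro x y
    simp [sigmaE, map_add, mul_add, add_mul, smul_add]
  · intro r x
    simp only [sigmaE, map_smul, smul_mul_assoc, mul_smul_comm]
    rw [smul_comm]
  · simp [sigmaE, map_one, mul_one, hsq, Algebra.algebraMap_eq_smul_one, smul_smul, hinv]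
  · intro x y
    simp only [sigmaE, reverse.map_mul, smul_mul_assoc, mul_smul_comm, smul_smul, key]
    rw [hinv, mul_one]
  · intro x
    simp only [sigmaE, map_smul, reverse.map_mul, reverse_ι, reverse_reverse,
      mul_smul_comm, smul_mul_assoc, smul_smul]
    have h2 : ι Q e * (ι Q e * (x * ι Q e)) * ι Q e = (Q e * Q e) • x := by
      simp only [← mul_assoc]
      rw [mul_assoc (ι Q e * ι Q e * x) (ι Q e) (ι Q e), hsq, ← Algebra.smul_def,
        ← Algebra.commutes, ← Algebra.smul_def, smul_smul]
    rw [h2, smul_smul, mul_mul_mul_comm, hinv, one_mul, one_smul]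
  · intro x
    simp only [sigmaE, reverse_reverse, map_smul, reverse.map_mul, reverse_ι, reverse_reverse,
      mul_assoc]
  · intro v
    simp only [sigmaE, reverse.map_mul, reverse_ι]
    simp only [mul_assoc]
    rw [hsq, ← Algebra.commutes, ← Algebra.smul_def]
    simp only [mul_smul_comm, smul_smul, hinv, one_smul, mul_assoc]
end

section
/- The positive cone is invariant under the twisted action of positive-norm elements of the Clifford group: let x ∈ Γ(1,n) satisfy x·reverse(x) = r·1 for some real number r > 0, and let v ∈ V satisfy q(v) > 0 and b(v,e) > 0. Then there exists w ∈ V with q(w) > 0 and b(w,e) > 0 such that σ_e(x) · ι(e)·ι(v) · x = ι(e)·ι(w). -/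
open CliffordAlgebra

/-- The quadratic form `q(v) = v₀² − (v₁² + ⋯ + v_n²)` of signature `(1,n)` on
`V = ℝ^{1+n}`. -/
noncomputable def Q1n (n : ℕ) : QuadraticForm ℝ (Fin (n + 1) → ℝ) :=
  QuadraticMap.weightedSumSquares ℝ
    (fun i : Fin (n + 1) => if i = 0 then (1 : ℝ) else -1)

/-- The associated bilinear form `b(v,w) = v₀w₀ − (v₁w₁ + ⋯ + v_nw_n)`. -/
def B1n (n : ℕ) (u v : Fin (n + 1) → ℝ) : ℝ :=
  ∑ i, (if i = 0 then (1 : ℝ) else -1) * u i * v i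

/-- The vector `e = (1, 0, …, 0)` (of norm `q(e) = 1`). -/
def e1n (n : ℕ) : Fin (n + 1) → ℝ := fun i => if i = 0 then 1 else 0

/-- The Clifford group `Γ(1,n)`: the subgroup of the group of units of `Cl(1,n)`
generated by the elements `ι(v)` with `v ∈ V` and `q(v) ≠ 0`. -/
noncomputable def CliffordGroup (n : ℕ) : Subgroup (CliffordAlgebra (Q1n n))ˣ :=
  Subgroup.closure {u : (CliffordAlgebra (Q1n n))ˣ |
    ∃ v : Fin (n + 1) → ℝ, Q1n n v ≠ 0 ∧ (u : CliffordAlgebra (Q1n n)) = ι (Q1n n) v}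

lemma Q1n_apply (n : ℕ) (v : Fin (n+1) → ℝ) :
    Q1n n v = v 0 ^ 2 - ∑ i : Fin n, v i.succ ^ 2 := by
  simp only [Q1n, QuadraticMap.weightedSumSquares_apply, smul_eq_mul]
  rw [Fin.sum_univ_succ]
  simp [Fin.succ_ne_zero, sq, Finset.sum_neg_distrib, sub_eq_add_neg]

lemma polar_Q1n (n : ℕ) (u v : Fin (n+1) → ℝ) :
    QuadraticMap.polar (Q1n n) u v
      = 2 * (u 0 * v 0 - ∑ i : Fin n, u i.succ * v i.succ) := by
  simp only [QuadraticMap.polar, Q1n_apply, Pi.add_apply]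
  have h : ∑ i : Fin n, (u i.succ + v i.succ)^2
      = ∑ i : Fin n, (u i.succ^2 + v i.succ^2 + 2*(u i.succ * v i.succ)) :=
    Finset.sum_congr rfl fun i _ => by ring
  rw [h, Finset.sum_add_distrib, Finset.sum_add_distrib, ← Finset.mul_sum]
  ring

lemma B1n_e (n : ℕ) (v : Fin (n+1) → ℝ) : B1n n v (e1n n) = v 0 := by
  rw [B1n, Fin.sum_univ_succ]
  simp [e1n, Fin.succ_ne_zero]

lemma Q1n_e (n : ℕ) : Q1n n (e1n n) = 1 := by
  rw [Q1n_apply]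
  simp [e1n, Fin.succ_ne_zero]

section refl
variable {R M : Type*} [CommRing R] [AddCommGroup M] [Module R M] (Q : QuadraticForm R M)

lemma clifford_refl (u v : M) :
    ι Q u * ι Q v * ι Q u = ι Q (QuadraticMap.polar Q u v • u - Q u • v) := by
  have h := CliffordAlgebra.ι_mul_ι_add_swap (Q := Q) u v
  have h2 : ι Q u * ι Q v = algebraMap R _ (QuadraticMap.polar Q u v) - ι Q v * ι Q u :=
    eq_sub_of_add_eq h
  calc ι Q u * ι Q v * ι Q u
      = (algebraMap R _ (QuadraticMap.polar Q u v) - ι Q v * ι Q u) * ι Q u := by rw [h2]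
    _ = algebraMap R _ (QuadraticMap.polar Q u v) * ι Q u - ι Q v * (ι Q u * ι Q u) := by
        rw [sub_mul, mul_assoc]
    _ = algebraMap R _ (QuadraticMap.polar Q u v) * ι Q u
          - ι Q v * algebraMap R _ (Q u) := by rw [CliffordAlgebra.ι_sq_scalar]
    _ = QuadraticMap.polar Q u v • ι Q u - Q u • ι Q v := by
        rw [← Algebra.smul_def, ← Algebra.commutes, ← Algebra.smul_def]
    _ = ι Q (QuadraticMap.polar Q u v • u - Q u • v) := by rw [map_sub, map_smul, map_smul]

lemma Q_refl (u v : M) :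
    Q (QuadraticMap.polar Q u v • u - Q u • v) = Q u * Q u * Q v := by
  rw [sub_eq_add_neg, ← neg_smul, QuadraticMap.map_add ⇑Q, QuadraticMap.map_smul,
    QuadraticMap.map_smul, QuadraticMap.polar_smul_left, QuadraticMap.polar_smul_right]
  simp only [smul_eq_mul]
  ring

end refl

lemma analytic (n : ℕ) (u v : Fin (n+1) → ℝ) (hu : u ≠ 0)
    (hv : 0 < Q1n n v) (hv0 : 0 < v 0) :
    0 < (QuadraticMap.polar (Q1n n) u v • u - Q1n n u • v) 0 := by
  have hq := Q1n_apply n v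
  set S := ∑ i : Fin n, u i.succ ^ 2 with hS
  set T := ∑ i : Fin n, v i.succ ^ 2 with hT
  set P := ∑ i : Fin n, u i.succ * v i.succ with hP
  have hSnn : 0 ≤ S := Finset.sum_nonneg fun i _ => sq_nonneg _
  have hTnn : 0 ≤ T := Finset.sum_nonneg fun i _ => sq_nonneg _
  have hCS : P ^ 2 ≤ S * T := by
    simpa [hS, hT, hP] using Finset.sum_mul_sq_le_sq_mul_sq Finset.univ
      (fun i : Fin n => u i.succ) (fun i : Fin n => v i.succ)
  have hTb : T < v 0 ^ 2 := by rw [Q1n_apply] at hv; linarith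
  have hpos : 0 < u 0 ^ 2 + S := by
    rcases eq_or_lt_of_le (add_nonneg (sq_nonneg (u 0)) hSnn) with h | h
    · exfalso
      apply hu
      have h0 : u 0 ^ 2 = 0 ∧ S = 0 := by constructor <;> nlinarith [sq_nonneg (u 0)]
      funext i
      show u i = 0
      refine Fin.cases ?_ ?_ i
      · exact pow_eq_zero_iff two_ne_zero |>.1 h0.1
      · intro j
        have hj := (Finset.sum_eq_zero_iff_of_nonneg
          (fun i (_ : i ∈ Finset.univ) => sq_nonneg (u (Fin.succ i)))).1 h0.2 j (Finset.mem_univ j)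
        exact pow_eq_zero_iff two_ne_zero |>.1 hj
    · exact h
  have hval : (QuadraticMap.polar (Q1n n) u v • u - Q1n n u • v) 0
      = (u 0 ^ 2 + S) * v 0 - 2 * (u 0 * P) := by
    simp only [Pi.sub_apply, Pi.smul_apply, smul_eq_mul, polar_Q1n, Q1n_apply]
    ring
  rw [hval]
  -- key inequality
  rcases eq_or_ne (u 0 * P) 0 with hz | hz
  · rw [hz]
    have := mul_pos hpos hv0
    linarith
  · have h1 : (2 * (u 0 * P))^2 ≤ 4 * (u 0 ^2 * (S * T)) := by nlinarith [sq_nonneg (u 0)]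
    have h2 : 4 * (u 0 ^2 * (S * T)) < (u 0 ^ 2 + S)^2 * v 0 ^2 := by
      have hu0 : u 0 ≠ 0 := fun h => hz (by simp [h])
      have hS0 : S ≠ 0 := by
        intro h; apply hz
        have hPz : P = 0 := by
          rw [hP]
          refine Finset.sum_eq_zero fun i _ => ?_
          have := (Finset.sum_eq_zero_iff_of_nonneg
            (fun i (_ : i ∈ Finset.univ) => sq_nonneg (u (Fin.succ i)))).1 h i (Finset.mem_univ i)
          rw [pow_eq_zero_iff two_ne_zero |>.1 this, zero_mul]
        rw [hPz, mul_zero]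
      have hu2 : 0 < u 0 ^ 2 := by positivity
      have hS2 : 0 < S := lt_of_le_of_ne hSnn (Ne.symm hS0)
      have k1 : 4 * (u 0 ^2 * (S * T)) < 4 * (u 0 ^2 * (S * v 0 ^ 2)) := by
        have := mul_pos hu2 hS2
        nlinarith
      have k2 : 4 * (u 0 ^2 * S) ≤ (u 0 ^ 2 + S)^2 := by nlinarith [sq_nonneg (u 0 ^ 2 - S)]
      nlinarith [sq_nonneg (v 0)]
    have hA : 0 < (u 0 ^ 2 + S) * v 0 := mul_pos hpos hv0
    have hB2 : (2 * (u 0 * P))^2 < ((u 0 ^ 2 + S) * v 0)^2 := by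
      calc (2 * (u 0 * P))^2 ≤ 4 * (u 0 ^2 * (S * T)) := h1
        _ < (u 0 ^ 2 + S)^2 * v 0 ^2 := h2
        _ = ((u 0 ^ 2 + S) * v 0)^2 := by ring
    have := lt_of_pow_lt_pow_left₀ 2 hA.le hB2
    linarith

def twistOK (n : ℕ) (y : CliffordAlgebra (Q1n n)) : Prop :=
  ∀ v : Fin (n+1) → ℝ, 0 < Q1n n v → 0 < v 0 →
    ∃ w : Fin (n+1) → ℝ, 0 < Q1n n w ∧ 0 < w 0 ∧
      reverse y * ι (Q1n n) v * y = ι (Q1n n) w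

lemma twistOK_one (n : ℕ) : twistOK n 1 := by
  intro v hv hv0
  exact ⟨v, hv, hv0, by simp⟩

lemma twistOK_mul (n : ℕ) (y z : CliffordAlgebra (Q1n n))
    (hy : twistOK n y) (hz : twistOK n z) : twistOK n (y * z) := by
  intro v hv hv0
  obtain ⟨w1, hw1, hw10, he1⟩ := hy v hv hv0
  obtain ⟨w2, hw2, hw20, he2⟩ := hz w1 hw1 hw10
  refine ⟨w2, hw2, hw20, ?_⟩
  rw [reverse.map_mul]
  calc reverse z * reverse y * ι (Q1n n) v * (y * z)
      = reverse z * (reverse y * ι (Q1n n) v * y) * z := by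
        simp only [mul_assoc]
    _ = reverse z * ι (Q1n n) w1 * z := by rw [he1]
    _ = ι (Q1n n) w2 := he2

lemma twistOK_smul_ι (n : ℕ) (c : ℝ) (hc : c ≠ 0) (u : Fin (n+1) → ℝ)
    (hu : Q1n n u ≠ 0) : twistOK n (c • ι (Q1n n) u) := by
  intro v hv hv0
  have hune : u ≠ 0 := fun h => hu (by rw [h, map_zero])
  have hc2 : 0 < c * c := mul_self_pos.2 hc
  refine ⟨(c * c) • (QuadraticMap.polar (Q1n n) u v • u - Q1n n u • v), ?_, ?_, ?_⟩
  · rw [QuadraticMap.map_smul, Q_refl]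
    have h1 : 0 < Q1n n u * Q1n n u := mul_self_pos.2 hu
    have := mul_pos hc2 (mul_pos hc2 (mul_pos h1 hv))
    simp only [smul_eq_mul]
    nlinarith
  · have := analytic n u v hune hv hv0
    simp only [Pi.smul_apply, smul_eq_mul]
    exact mul_pos hc2 this
  · rw [map_smul, reverse_ι, smul_mul_assoc, smul_mul_assoc, mul_smul_comm,
      clifford_refl, smul_smul, map_smul]

lemma twistOK_of_mem (n : ℕ) (x : (CliffordAlgebra (Q1n n))ˣ)
    (hx : x ∈ CliffordGroup n) : twistOK n (x : CliffordAlgebra (Q1n n)) := by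
  suffices h : twistOK n (x : CliffordAlgebra (Q1n n))
      ∧ twistOK n ((x⁻¹ : (CliffordAlgebra (Q1n n))ˣ) : CliffordAlgebra (Q1n n)) from h.1
  refine Subgroup.closure_induction
    (p := fun (g : (CliffordAlgebra (Q1n n))ˣ) _ => twistOK n (g : CliffordAlgebra (Q1n n))
      ∧ twistOK n ((g⁻¹ : (CliffordAlgebra (Q1n n))ˣ) : CliffordAlgebra (Q1n n)))
    ?_ ?_ ?_ ?_ hx
  · rintro y ⟨u, hu, hyu⟩
    constructor
    · rw [hyu]
      have := twistOK_smul_ι n 1 one_ne_zero u hu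
      rwa [one_smul] at this
    · have hinv : ((y⁻¹ : (CliffordAlgebra (Q1n n))ˣ) : CliffordAlgebra (Q1n n))
          = (Q1n n u)⁻¹ • ι (Q1n n) u := by
        apply Units.inv_eq_of_mul_eq_one_right
        rw [hyu, mul_smul_comm, ι_sq_scalar, Algebra.algebraMap_eq_smul_one, smul_smul,
          inv_mul_cancel₀ hu, one_smul]
      rw [hinv]
      exact twistOK_smul_ι n (Q1n n u)⁻¹ (inv_ne_zero hu) u hu
  · simp only [inv_one, Units.val_one]
    exact ⟨twistOK_one n, twistOK_one n⟩
  · rintro a b _ _ ⟨ha1, ha2⟩ ⟨hb1, hb2⟩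
    constructor
    · rw [Units.val_mul]
      exact twistOK_mul n _ _ ha1 hb1
    · rw [mul_inv_rev, Units.val_mul]
      exact twistOK_mul n _ _ hb2 ha2
  · rintro a _ ⟨ha1, ha2⟩
    exact ⟨ha2, by rwa [inv_inv]⟩

/-- The positive cone is invariant under the twisted action of positive-norm elements
of the Clifford group: if `x ∈ Γ(1,n)` has `x·reverse(x) = r·1` with `r > 0`, and
`v` satisfies `q(v) > 0` and `b(v,e) > 0`, then
`σ_e(x) · ι(e)ι(v) · x = ι(e)ι(w)` for some `w` with `q(w) > 0` and `b(w,e) > 0`,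
where `σ_e(x) = ι(e)·reverse(x)·ι(e)`. -/
theorem positive_cone_invariant (n : ℕ) (hn : 1 ≤ n)
    (x : (CliffordAlgebra (Q1n n))ˣ) (hx : x ∈ CliffordGroup n)
    (r : ℝ) (hr : 0 < r)
    (hxr : (x : CliffordAlgebra (Q1n n)) * reverse (x : CliffordAlgebra (Q1n n))
      = r • 1)
    (v : Fin (n + 1) → ℝ) (hv : 0 < Q1n n v) (hve : 0 < B1n n v (e1n n)) :
    ∃ w : Fin (n + 1) → ℝ, 0 < Q1n n w ∧ 0 < B1n n w (e1n n) ∧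
      (ι (Q1n n) (e1n n) * reverse (x : CliffordAlgebra (Q1n n)) * ι (Q1n n) (e1n n))
          * (ι (Q1n n) (e1n n) * ι (Q1n n) v) * (x : CliffordAlgebra (Q1n n))
        = ι (Q1n n) (e1n n) * ι (Q1n n) w := by
  rw [B1n_e] at hve
  obtain ⟨w, hw1, hw0, heq⟩ := twistOK_of_mem n x hx v hv hve
  refine ⟨w, hw1, by rwa [B1n_e], ?_⟩
  have he : ι (Q1n n) (e1n n) * ι (Q1n n) (e1n n) = 1 := by
    rw [ι_sq_scalar, Q1n_e, map_one]
  simp only [mul_assoc]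
  rw [← mul_assoc (ι (Q1n n) (e1n n)) (ι (Q1n n) (e1n n)), he, one_mul]
  rw [← mul_assoc (reverse (x : CliffordAlgebra (Q1n n))), heq]
end
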